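/- arXiv:2604.28112 — 4 statements merged into one kernel-verified Lean document; each statement's English description precedes it below -/
import Mathlib

section
/- Grounded attack splitting (one direction): with (F₁,F₂,R₃), R₃ᶜ, and F₂* as in the attack-splitting construction, if E₁ ∈ grd(F₁) and E₂ ∈ grd(F₂*), then E₁ ∪ E₂ ∈ grd(F). (The converse direction fails in general.) -/
variable {α : Type*}

/-- A bipolar set-argumentation framework: arguments `A`, collective attacks `R`,
collective supports `S`. -/
structure BSAF (α : Type*) where
  A : Set α
  R : Set (Set α × α)
  S : Set (Set α × α)

namespace BSAF

/-- Membership in the least superset of `E` that is closed under the supports of `F`. -/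
inductive InCl (F : BSAF α) (E : Set α) : α → Prop
  | base {a : α} : a ∈ E → InCl F E a
  | step {T : Set α} {h : α} : (T, h) ∈ F.S → (∀ t ∈ T, InCl F E t) → InCl F E h

/-- The closure of `E` under the supports of `F`. -/
def cl (F : BSAF α) (E : Set α) : Set α := {a | F.InCl E a}

/-- `E` is closed if its closure equals itself. -/
def Closed (F : BSAF α) (E : Set α) : Prop := F.cl E = E

/-- `E` attacks the set `D`. -/
def Attacks (F : BSAF α) (E D : Set α) : Prop :=
  ∃ T h, (T, h) ∈ F.R ∧ T ⊆ E ∧ h ∈ D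

/-- `E` is conflict-free: it does not attack itself. -/
def ConflictFree (F : BSAF α) (E : Set α) : Prop :=
  ¬ ∃ T h, (T, h) ∈ F.R ∧ T ⊆ E ∧ h ∈ E

/-- `E` defends `a`: every closed attacker of `a` is attacked by `E`. -/
def Defends (F : BSAF α) (E : Set α) (a : α) : Prop :=
  ∀ D : Set α, D ⊆ F.A → F.Closed D → (∃ T, (T, a) ∈ F.R ∧ T ⊆ D) → F.Attacks E D

/-- `E` is admissible: conflict-free, closed, and defends each of its members. -/
def Admissible (F : BSAF α) (E : Set α) : Prop :=
  E ⊆ F.A ∧ F.ConflictFree E ∧ F.Closed E ∧ ∀ a ∈ E, F.Defends E a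

/-- `E` is complete: admissible and contains every argument it defends. -/
def Complete (F : BSAF α) (E : Set α) : Prop :=
  F.Admissible E ∧ ∀ a ∈ F.A, F.Defends E a → a ∈ E

/-- Grounded: ⊆-minimal complete. -/
def Grounded (F : BSAF α) (E : Set α) : Prop :=
  F.Complete E ∧ ∀ E', F.Complete E' → E' ⊆ E → E' = E

/-- Preferred: ⊆-maximal admissible. -/
def Preferred (F : BSAF α) (E : Set α) : Prop :=
  F.Admissible E ∧ ∀ E', F.Admissible E' → E ⊆ E' → E' = E

/-- Stable: admissible and attacks every outside argument. -/
def Stable (F : BSAF α) (E : Set α) : Prop :=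
  F.Admissible E ∧ ∀ x ∈ F.A \ E, ∃ T, (T, x) ∈ F.R ∧ T ⊆ E

end BSAF
namespace BSAF

/-- All links of `G` stay within its argument set. -/
def WithinA (G : BSAF α) : Prop :=
  (∀ p ∈ G.R, p.1 ⊆ G.A ∧ p.2 ∈ G.A) ∧ (∀ p ∈ G.S, p.1 ⊆ G.A ∧ p.2 ∈ G.A)

/-- `(F₁, F₂, R₃)` is an attack splitting of `F`. -/
def IsAttackSplitting (F F₁ F₂ : BSAF α) (R₃ : Set (Set α × α)) : Prop :=
  F₁.WithinA ∧ F₂.WithinA ∧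
  F₁.A ∩ F₂.A = ∅ ∧ F.A = F₁.A ∪ F₂.A ∧
  F.S = F₁.S ∪ F₂.S ∧
  F.R = F₁.R ∪ F₂.R ∪ R₃ ∧
  ∀ p ∈ R₃, (p.1 ∩ F₁.A).Nonempty ∧ p.1 ⊆ F.A ∧ p.2 ∈ F₂.A

/-- The closed negative links `R₃ᶜ = {(cl(T), h) | (T, h) ∈ R₃}`. -/
def closedLinks (F : BSAF α) (R₃ : Set (Set α × α)) : Set (Set α × α) :=
  {p | ∃ T h, (T, h) ∈ R₃ ∧ p = (F.cl T, h)}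

/-- The arguments attacked by `E` via the attack relation `Rs`. -/
def attackedBy (Rs : Set (Set α × α)) (E : Set α) : Set α :=
  {a | ∃ T, (T, a) ∈ Rs ∧ T ⊆ E}

/-- The `(E₁, R₃ᶜ)`-reduct of `F₂`. -/
def Rreduct (F F₁ F₂ : BSAF α) (R₃ : Set (Set α × α)) (E₁ : Set α) : BSAF α where
  A := F₂.A
  R := F₂.R ∪ {p | ∃ T h, (T, h) ∈ F.closedLinks R₃ ∧
        T ∩ attackedBy (F₁.R ∪ F.closedLinks R₃) E₁ = ∅ ∧
        T ∩ F₁.A ⊆ E₁ ∧ p = (T ∩ F₂.A, h)}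
  S := F₂.S

/-- The undecided links in `R₃ᶜ` w.r.t. `E₁`. -/
def undecidedLinks (F F₁ : BSAF α) (R₃ : Set (Set α × α)) (E₁ : Set α) : Set (Set α × α) :=
  {p | p ∈ F.closedLinks R₃ ∧
    p.1 ∩ attackedBy (F₁.R ∪ F.closedLinks R₃) E₁ = ∅ ∧ ¬ p.1 ∩ F₁.A ⊆ E₁}

/-- The modification `F₂* = mod^{E₁}_{R₃ᶜ}(F₂^{E₁})`, with fresh self-attacker `s₀`. -/
def modification (F F₁ F₂ : BSAF α) (R₃ : Set (Set α × α)) (E₁ : Set α) (s₀ : α) : BSAF α where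
  A := F₂.A ∪ {s₀}
  R := (F.Rreduct F₁ F₂ R₃ E₁).R ∪ {({s₀}, s₀)} ∪
       {p | ∃ T h, (T, h) ∈ F.undecidedLinks F₁ R₃ E₁ ∧ p = ((T ∩ F₂.A) ∪ {s₀}, h)}
  S := F₂.S

end BSAF
namespace BSAF

theorem incl_mono {F G : BSAF α} {X Y : Set α} (hS : F.S ⊆ G.S) (hXY : X ⊆ Y) :
    ∀ {a}, F.InCl X a → G.InCl Y a := by
  intro a h
  induction h with
  | base h => exact .base (hXY h)
  | step hTS _ ih => exact .step (hS hTS) ih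

theorem incl_idem {F : BSAF α} {X : Set α} :
    ∀ {a}, F.InCl (F.cl X) a → F.InCl X a := by
  intro a h
  induction h with
  | base h => exact h
  | step hTS _ ih => exact .step hTS ih

theorem closed_of {F : BSAF α} {X : Set α} (h : ∀ a, F.InCl X a → a ∈ X) :
    F.Closed X :=
  Set.ext fun a => ⟨h a, .base⟩

theorem mem_of_closed {F : BSAF α} {X : Set α} (h : F.Closed X) {a : α}
    (ha : F.InCl X a) : a ∈ X := by
  rw [← h]; exact ha

theorem closed_restrict {F G : BSAF α} {B D X : Set α}
    (hGS : G.S ⊆ F.S) (hGW : ∀ p ∈ G.S, p.1 ⊆ B ∧ p.2 ∈ B)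
    (hD : ∀ a, F.InCl D a → a ∈ D) (hX : X ∩ B ⊆ D) :
    ∀ a, G.InCl (D ∩ B ∪ X) a → a ∈ D ∩ B ∪ X := by
  intro a h
  induction h with
  | base h => exact h
  | @step T h hTS hT ih =>
    obtain ⟨hTB, hhB⟩ := hGW _ hTS
    refine Or.inl ⟨hD _ (.step (hGS hTS) fun t ht => ?_), hhB⟩
    rcases ih t ht with h1 | h2
    · exact .base h1.1
    · exact .base (hX ⟨h2, hTB ht⟩)

theorem incl_split {F F₁ F₂ : BSAF α} (hS : F.S = F₁.S ∪ F₂.S)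
    (hW₁ : F₁.WithinA) (hW₂ : F₂.WithinA) (hdisj : F₁.A ∩ F₂.A = ∅) {X : Set α} :
    ∀ {a}, F.InCl X a →
      (a ∈ F₁.A → F₁.InCl (X ∩ F₁.A) a) ∧ (a ∈ F₂.A → F₂.InCl (X ∩ F₂.A) a) := by
  intro a h
  induction h with
  | base h => exact ⟨fun ha => .base ⟨h, ha⟩, fun ha => .base ⟨h, ha⟩⟩
  | @step T h hTS hT ih =>
    rw [hS] at hTS
    rcases hTS with h1 | h2
    · obtain ⟨hTB, hhB⟩ := hW₁.2 _ h1
      refine ⟨fun _ => .step h1 fun t ht => (ih t ht).1 (hTB ht), fun hh2 => ?_⟩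
      exact absurd (⟨hhB, hh2⟩ : h ∈ F₁.A ∩ F₂.A) (fun hc => Set.eq_empty_iff_forall_notMem.mp hdisj h ⟨hc.1, hc.2⟩)
    · obtain ⟨hTB, hhB⟩ := hW₂.2 _ h2
      refine ⟨fun hh1 => ?_, fun _ => .step h2 fun t ht => (ih t ht).2 (hTB ht)⟩
      exact absurd (⟨hh1, hhB⟩ : h ∈ F₁.A ∩ F₂.A) (fun hc => Set.eq_empty_iff_forall_notMem.mp hdisj h ⟨hc.1, hc.2⟩)

theorem incl_range {F F₁ F₂ : BSAF α} (hS : F.S = F₁.S ∪ F₂.S)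
    (hW₁ : F₁.WithinA) (hW₂ : F₂.WithinA) {X : Set α} :
    ∀ {a}, F.InCl X a → a ∈ X ∨ a ∈ F₁.A ∨ a ∈ F₂.A := by
  intro a h
  induction h with
  | base h => exact Or.inl h
  | @step T h hTS _ _ =>
    rw [hS] at hTS
    rcases hTS with h1 | h2
    · exact Or.inr (Or.inl (hW₁.2 _ h1).2)
    · exact Or.inr (Or.inr (hW₂.2 _ h2).2)

end BSAF
namespace BSAF
section Split

variable {F F₁ F₂ : BSAF α} {R₃ : Set (Set α × α)} {s₀ : α} {E₁ E₂ : Set α}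

/-- membership helpers for the modification's attack relation -/
theorem mem_mod_of_F2 (hm : (T, h) ∈ F₂.R) :
    (T, h) ∈ (F.modification F₁ F₂ R₃ E₁ s₀).R := Or.inl (Or.inl (Or.inl hm))

theorem mem_mod_reduct {Tc : Set α} (hm : (Tc, h) ∈ F.closedLinks R₃)
    (h1 : Tc ∩ attackedBy (F₁.R ∪ F.closedLinks R₃) E₁ = ∅) (h2 : Tc ∩ F₁.A ⊆ E₁) :
    (Tc ∩ F₂.A, h) ∈ (F.modification F₁ F₂ R₃ E₁ s₀).R :=
  Or.inl (Or.inl (Or.inr ⟨Tc, h, hm, h1, h2, rfl⟩))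

theorem mem_mod_undec {Tc : Set α} (hm : (Tc, h) ∈ F.closedLinks R₃)
    (h1 : Tc ∩ attackedBy (F₁.R ∪ F.closedLinks R₃) E₁ = ∅) (h2 : ¬ Tc ∩ F₁.A ⊆ E₁) :
    ((Tc ∩ F₂.A) ∪ {s₀}, h) ∈ (F.modification F₁ F₂ R₃ E₁ s₀).R :=
  Or.inr ⟨Tc, h, ⟨hm, h1, h2⟩, rfl⟩

theorem mem_mod_self : (({s₀}, s₀) : Set α × α) ∈ (F.modification F₁ F₂ R₃ E₁ s₀).R :=
  Or.inl (Or.inr rfl)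

variable (hsplit : F.IsAttackSplitting F₁ F₂ R₃) (hs₀ : s₀ ∉ F.A)

include hsplit

theorem not_both {a : α} (h1 : a ∈ F₁.A) (h2 : a ∈ F₂.A) : False := by
  obtain ⟨_, _, hdisj, _⟩ := hsplit
  exact Set.eq_empty_iff_forall_notMem.mp hdisj a ⟨h1, h2⟩

theorem subA₁ : F₁.A ⊆ F.A := by
  obtain ⟨_, _, _, hA, _⟩ := hsplit
  rw [hA]; exact Set.subset_union_left

theorem subA₂ : F₂.A ⊆ F.A := by
  obtain ⟨_, _, _, hA, _⟩ := hsplit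
  rw [hA]; exact Set.subset_union_right

/-- classify an attack of `F` with head in `F₁.A` -/
theorem attack_head₁ {T : Set α} {a : α} (hm : (T, a) ∈ F.R) (ha : a ∈ F₁.A) :
    (T, a) ∈ F₁.R := by
  obtain ⟨hW₁, hW₂, hdisj, hA, hS, hR, hR₃⟩ := hsplit
  rw [hR] at hm
  rcases hm with (h1 | h2) | h3
  · exact h1
  · exact absurd ((hW₂.1 _ h2).2) (fun hc =>
      Set.eq_empty_iff_forall_notMem.mp hdisj a ⟨ha, hc⟩)
  · exact absurd ((hR₃ _ h3).2.2) (fun hc =>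
      Set.eq_empty_iff_forall_notMem.mp hdisj a ⟨ha, hc⟩)

/-- a closed link's tail is included in `F.A` split into the two parts -/
theorem closedLink_tail {Tc : Set α} {h : α} (hm : (Tc, h) ∈ F.closedLinks R₃) :
    (∃ T₀, (T₀, h) ∈ R₃ ∧ T₀ ⊆ Tc ∧ Tc = F.cl T₀) ∧ Tc ⊆ F₁.A ∪ F₂.A := by
  obtain ⟨T₀, h₀, hT₀, heq⟩ := hm
  obtain ⟨heq1, heq2⟩ := Prod.mk.injEq .. ▸ heq
  subst heq1; subst heq2
  obtain ⟨hW₁, hW₂, hdisj, hA, hS, hR, hR₃⟩ := hsplit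
  refine ⟨⟨T₀, hT₀, fun t ht => InCl.base ht, rfl⟩, fun x hx => ?_⟩
  rcases incl_range hS hW₁ hW₂ hx with h1 | h2
  · have := (hR₃ _ hT₀).2.1 h1
    rwa [hA] at this
  · exact h2

end Split
end BSAF
namespace BSAF
section Split2

variable {F F₁ F₂ : BSAF α} {R₃ : Set (Set α × α)} {s₀ : α} {E₁ E₂ : Set α}
variable (hsplit : F.IsAttackSplitting F₁ F₂ R₃) (hs₀ : s₀ ∉ F.A)

include hsplit hs₀

theorem s0_notMem₂ {G : Set α} (hG : G ⊆ F₂.A) : s₀ ∉ G :=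
  fun hc => hs₀ (subA₂ hsplit (hG hc))

/-- translation: a modification attack whose tail lies in `G ⊆ F₂.A` yields an `F` attack
with the same head and tail inside `E₁ ∪ G`. -/
theorem translate {T' : Set α} {h' : α} {G : Set α}
    (hmem : (T', h') ∈ (F.modification F₁ F₂ R₃ E₁ s₀).R)
    (hT' : T' ⊆ G) (hG : G ⊆ F₂.A) :
    ∃ T₀, (T₀, h') ∈ F.R ∧ T₀ ⊆ E₁ ∪ G := by
  have hs₂ : s₀ ∉ G := s0_notMem₂ hsplit hs₀ hG
  obtain ⟨hW₁, hW₂, hdisj, hA, hS, hR, hR₃⟩ := hsplit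
  rcases hmem with ((h2 | hred) | hself) | hund
  · exact ⟨T', by rw [hR]; exact Or.inl (Or.inr h2), fun t ht => Or.inr (hT' ht)⟩
  · obtain ⟨Tc, h, hClm, hA₁, hF₁E, heq⟩ := hred
    obtain ⟨heq1, heq2⟩ := Prod.mk.injEq .. ▸ heq
    subst heq1; subst heq2
    obtain ⟨⟨T₀, hT₀, hT₀Tc, -⟩, hTcA⟩ :=
      closedLink_tail ⟨hW₁, hW₂, hdisj, hA, hS, hR, hR₃⟩ hClm
    refine ⟨T₀, by rw [hR]; exact Or.inr hT₀, fun t ht => ?_⟩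
    rcases hTcA (hT₀Tc ht) with h1 | h2
    · exact Or.inl (hF₁E ⟨hT₀Tc ht, h1⟩)
    · exact Or.inr (hT' ⟨hT₀Tc ht, h2⟩)
  · have hself' : (T', h') = ({s₀}, s₀) := hself
    obtain ⟨heq1, heq2⟩ := Prod.mk.injEq .. ▸ hself'
    exact absurd (hT' (heq1 ▸ rfl)) hs₂
  · obtain ⟨Tc, h, hund', heq⟩ := hund
    obtain ⟨heq1, heq2⟩ := Prod.mk.injEq .. ▸ heq
    exact absurd (hT' (heq1 ▸ Or.inr rfl)) hs₂

/-- any modification attack with tail inside `G ⊆ F₂.A` has head in `F₂.A`. -/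
theorem mod_head_mem {T' : Set α} {h' : α} {G : Set α}
    (hmem : (T', h') ∈ (F.modification F₁ F₂ R₃ E₁ s₀).R)
    (hT' : T' ⊆ G) (hG : G ⊆ F₂.A) : h' ∈ F₂.A := by
  have hs₂ : s₀ ∉ G := s0_notMem₂ hsplit hs₀ hG
  obtain ⟨hW₁, hW₂, hdisj, hA, hS, hR, hR₃⟩ := hsplit
  rcases hmem with ((h2 | hred) | hself) | hund
  · exact (hW₂.1 _ h2).2
  · obtain ⟨Tc, h, hClm, -, -, heq⟩ := hred
    obtain ⟨heq1, heq2⟩ := Prod.mk.injEq .. ▸ heq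
    subst heq2
    obtain ⟨T₀, h₀, hT₀, heq'⟩ := hClm
    obtain ⟨-, heq2'⟩ := Prod.mk.injEq .. ▸ heq'
    exact heq2' ▸ (hR₃ _ hT₀).2.2
  · have hself' : (T', h') = ({s₀}, s₀) := hself
    obtain ⟨heq1, heq2⟩ := Prod.mk.injEq .. ▸ hself'
    exact absurd (hT' (heq1 ▸ rfl)) hs₂
  · obtain ⟨Tc, h, hund', heq⟩ := hund
    obtain ⟨heq1, heq2⟩ := Prod.mk.injEq .. ▸ heq
    exact absurd (hT' (heq1 ▸ Or.inr rfl)) hs₂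

end Split2
end BSAF
namespace BSAF
section Split3

variable {F F₁ F₂ : BSAF α} {R₃ : Set (Set α × α)} {s₀ : α} {E₁ E₂ : Set α}
variable (hsplit : F.IsAttackSplitting F₁ F₂ R₃) (hs₀ : s₀ ∉ F.A)

include hsplit

/-- an element of `F₁.A` attacked by `E₁` (via `F₁.R ∪ R₃ᶜ`) is attacked via `F₁.R`. -/
theorem a1_mem₁ {a : α} (ha : a ∈ F₁.A)
    (h : a ∈ attackedBy (F₁.R ∪ F.closedLinks R₃) E₁) :
    ∃ T, (T, a) ∈ F₁.R ∧ T ⊆ E₁ := by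
  obtain ⟨T, hm, hTE⟩ := h
  rcases hm with h1 | h3
  · exact ⟨T, h1, hTE⟩
  · obtain ⟨T₀, h₀, hT₀, heq⟩ := h3
    obtain ⟨-, heq2⟩ := Prod.mk.injEq .. ▸ heq
    obtain ⟨_, _, hdisj, _, _, _, hR₃⟩ := hsplit
    exact absurd (heq2 ▸ (hR₃ _ hT₀).2.2)
      (fun hc => Set.eq_empty_iff_forall_notMem.mp hdisj a ⟨ha, hc⟩)

include hs₀

theorem s0_notMem_E₂
    (hcf₂ : (F.modification F₁ F₂ R₃ E₁ s₀).ConflictFree E₂) : s₀ ∉ E₂ := by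
  intro hc
  exact hcf₂ ⟨{s₀}, s₀, mem_mod_self, fun t ht => ht ▸ hc, hc⟩

theorem E₂_subset
    (hadm₂ : (F.modification F₁ F₂ R₃ E₁ s₀).Admissible E₂) : E₂ ⊆ F₂.A := by
  intro x hx
  rcases hadm₂.1 hx with h | h
  · exact h
  · exact absurd (h ▸ hx) (fun hc => s0_notMem_E₂ hsplit hs₀ hadm₂.2.1 (by
      have : x = s₀ := h
      exact this ▸ hx))

/-- no member of `E₁ ∪ E₂` is attacked by `E₁` via `F₁.R ∪ R₃ᶜ`. -/
theorem attE (hadm₁ : F₁.Admissible E₁)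
    (hadm₂ : (F.modification F₁ F₂ R₃ E₁ s₀).Admissible E₂)
    {x : α} (hx : x ∈ E₁ ∪ E₂)
    (hA₁ : x ∈ attackedBy (F₁.R ∪ F.closedLinks R₃) E₁) : False := by
  have hE₂A : E₂ ⊆ F₂.A := E₂_subset hsplit hs₀ hadm₂
  have hE₁A : E₁ ⊆ F₁.A := hadm₁.1
  obtain ⟨T, hm, hTE⟩ := hA₁
  rcases hm with h1 | h3
  · -- attack via F₁.R: head in F₁.A, so x ∈ E₁, contradicting CF of E₁
    have hx₁ : x ∈ E₁ := by
      rcases hx with h | h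
      · exact h
      · exact absurd (hsplit.1.1 _ h1).2
          (fun hc => not_both hsplit hc (hE₂A h))
    exact hadm₁.2.1 ⟨T, x, h1, hTE, hx₁⟩
  · -- attack via a closed link: head in F₂.A, so x ∈ E₂
    obtain ⟨⟨T₀, hT₀, hT₀T, -⟩, -⟩ := closedLink_tail hsplit h3
    have hhx₂ : x ∈ F₂.A := by
      obtain ⟨T₀', h₀, hT₀', heq⟩ := h3
      obtain ⟨-, heq2⟩ := Prod.mk.injEq .. ▸ heq
      exact heq2 ▸ (hsplit.2.2.2.2.2.2 _ hT₀').2.2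
    have hx₂ : x ∈ E₂ := by
      rcases hx with h | h
      · exact absurd (hE₁A h) (fun hc => not_both hsplit hc hhx₂)
      · exact h
    -- T = cl T₀ ⊆ E₁; its E₁-attacked part is empty
    have hTA₁ : T ∩ attackedBy (F₁.R ∪ F.closedLinks R₃) E₁ = ∅ := by
      apply Set.eq_empty_iff_forall_notMem.mpr
      rintro y ⟨hyT, hyA⟩
      obtain ⟨T', hT'R, hT'E⟩ := a1_mem₁ hsplit (hE₁A (hTE hyT)) hyA
      exact hadm₁.2.1 ⟨T', y, hT'R, hT'E, hTE hyT⟩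
    have hTF₁ : T ∩ F₁.A ⊆ E₁ := fun y hy => hTE hy.1
    have hmem : (T ∩ F₂.A, x) ∈ (F.modification F₁ F₂ R₃ E₁ s₀).R :=
      mem_mod_reduct h3 hTA₁ hTF₁
    refine hadm₂.2.1 ⟨T ∩ F₂.A, x, hmem, fun y hy => ?_, hx₂⟩
    exact absurd (hE₁A (hTE hy.1)) (fun hc => not_both hsplit hc hy.2)

end Split3
end BSAF
namespace BSAF
section Split4

variable {F F₁ F₂ : BSAF α} {R₃ : Set (Set α × α)} {s₀ : α} {E₁ E₂ : Set α}
variable (hsplit : F.IsAttackSplitting F₁ F₂ R₃)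

include hsplit

/-- the intersection with `F₁.A` of an `F`-closed set is `F₁`-closed, etc. -/
theorem closed_inter₁ {D : Set α} (hD : ∀ a, F.InCl D a → a ∈ D) :
    ∀ a, F₁.InCl (D ∩ F₁.A) a → a ∈ D ∩ F₁.A := by
  intro a h
  obtain ⟨hW₁, hW₂, hdisj, hA, hS, hR, hR₃⟩ := hsplit
  have := closed_restrict (F := F) (G := F₁) (B := F₁.A) (D := D) (X := (∅ : Set α))
    (by rw [hS]; exact Set.subset_union_left) hW₁.2 hD (by simp)
  rcases this a (by rwa [Set.union_empty]) with h1 | h2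
  · exact h1
  · exact absurd h2 (by simp)

theorem closed_inter₂ {D X : Set α} (hD : ∀ a, F.InCl D a → a ∈ D)
    (hX : X ∩ F₂.A ⊆ D) :
    ∀ a, (F.modification F₁ F₂ R₃ E₁ s₀).InCl (D ∩ F₂.A ∪ X) a → a ∈ D ∩ F₂.A ∪ X := by
  obtain ⟨hW₁, hW₂, hdisj, hA, hS, hR, hR₃⟩ := hsplit
  exact closed_restrict (F := F) (G := F.modification F₁ F₂ R₃ E₁ s₀) (B := F₂.A)
    (by rw [hS]; exact Set.subset_union_right) hW₂.2 hD hX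

/-- `F`-defense transfers to `F₁`-defense for heads in `F₁.A`. -/
theorem keyA {E' : Set α} (hcl' : ∀ a, F.InCl E' a → a ∈ E')
    (hcf' : F.ConflictFree E') {a : α} (ha : a ∈ F₁.A)
    (hdef : F.Defends E' a) : F₁.Defends (E' ∩ F₁.A) a := by
  obtain ⟨hW₁, hW₂, hdisj, hA, hS, hR, hR₃⟩ := hsplit
  have hsp : F.IsAttackSplitting F₁ F₂ R₃ := ⟨hW₁, hW₂, hdisj, hA, hS, hR, hR₃⟩
  rintro D₁ hD₁A hD₁cl ⟨T, hTa, hTD₁⟩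
  -- apply F-defense to D := cl_F D₁
  have hDcl : F.Closed (F.cl D₁) := closed_of fun a h => incl_idem h
  have hDA : F.cl D₁ ⊆ F.A := by
    intro x hx
    rcases incl_range hS hW₁ hW₂ hx with h | h | h
    · exact subA₁ hsp (hD₁A h)
    · exact subA₁ hsp h
    · exact subA₂ hsp h
  obtain ⟨T', h', hT'R, hT'E, hh'D⟩ := hdef (F.cl D₁) hDA hDcl
    ⟨T, (by rw [hR]; exact Or.inl (Or.inl hTa)), fun t ht => InCl.base (hTD₁ ht)⟩
  -- locate h'
  have hh' : (h' ∈ F₁.A → F₁.InCl (D₁ ∩ F₁.A) h') ∧ (h' ∈ F₂.A → F₂.InCl (D₁ ∩ F₂.A) h') :=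
    incl_split hS hW₁ hW₂ hdisj hh'D
  rcases incl_range hS hW₁ hW₂ hh'D with h | h | h
  · -- h' ∈ D₁ ⊆ F₁.A
    have h1 : h' ∈ F₁.A := hD₁A h
    have hF₁ : (T', h') ∈ F₁.R := attack_head₁ hsp hT'R h1
    exact ⟨T', h', hF₁, fun t ht => ⟨hT'E ht, (hW₁.1 _ hF₁).1 ht⟩, h⟩
  · have hD₁' : F₁.InCl (D₁ ∩ F₁.A) h' := hh'.1 h
    have hh'D₁ : h' ∈ D₁ := mem_of_closed hD₁cl
      (incl_mono (Set.Subset.refl _) Set.inter_subset_left hD₁')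
    have hF₁ : (T', h') ∈ F₁.R := attack_head₁ hsp hT'R h
    exact ⟨T', h', hF₁, fun t ht => ⟨hT'E ht, (hW₁.1 _ hF₁).1 ht⟩, hh'D₁⟩
  · -- h' ∈ F₂.A : then h' is derivable from ∅, hence h' ∈ E', contradicting CF
    have hD₂' : F₂.InCl (D₁ ∩ F₂.A) h' := hh'.2 h
    have hempty : D₁ ∩ F₂.A ⊆ E' := by
      rintro y ⟨hy1, hy2⟩
      exact absurd (hD₁A hy1) (fun hc => not_both hsp hc hy2)
    have hh'E : h' ∈ E' := hcl' _ (incl_mono (by rw [hS]; exact Set.subset_union_right)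
      hempty hD₂')
    exact absurd ⟨T', h', hT'R, hT'E, hh'E⟩ hcf'

/-- `F₁`-defense transfers to `F`-defense for heads in `F₁.A`. -/
theorem keyB {E' : Set α} {a : α} (ha : a ∈ F₁.A)
    (hdef : F₁.Defends (E' ∩ F₁.A) a) : F.Defends E' a := by
  obtain ⟨hW₁, hW₂, hdisj, hA, hS, hR, hR₃⟩ := hsplit
  have hsp : F.IsAttackSplitting F₁ F₂ R₃ := ⟨hW₁, hW₂, hdisj, hA, hS, hR, hR₃⟩
  rintro D hDA hDcl ⟨T, hTa, hTD⟩
  have hT₁ : (T, a) ∈ F₁.R := attack_head₁ hsp hTa ha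
  have hDc : ∀ x, F.InCl D x → x ∈ D := fun x hx => mem_of_closed hDcl hx
  have hcl₁ : F₁.Closed (D ∩ F₁.A) := closed_of (closed_inter₁ hsp hDc)
  obtain ⟨T', h', hm, hT'E, hh'⟩ := hdef (D ∩ F₁.A) Set.inter_subset_right hcl₁
    ⟨T, hT₁, fun t ht => ⟨hTD ht, (hW₁.1 _ hT₁).1 ht⟩⟩
  exact ⟨T', h', by rw [hR]; exact Or.inl (Or.inl hm),
    fun t ht => (hT'E ht).1, hh'.1⟩

end Split4
end BSAF
namespace BSAF
section Split5

variable {F F₁ F₂ : BSAF α} {R₃ : Set (Set α × α)} {s₀ : α} {E₁ E₂ : Set α}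
variable (hsplit : F.IsAttackSplitting F₁ F₂ R₃) (hs₀ : s₀ ∉ F.A)
variable (hadm₁ : F₁.Admissible E₁)
variable (hadm₂ : (F.modification F₁ F₂ R₃ E₁ s₀).Admissible E₂)

include hsplit hs₀ hadm₁ hadm₂

/-- translating an `F`-attack from `E'` with head in `D₂ ∩ F₂.A` into a modification
attack from `E' ∩ F₂.A` on `D₂`. -/
theorem finish₂ {E' D₂ : Set α} (hE'sub : E' ⊆ E₁ ∪ E₂)
    (hcl' : ∀ a, F.InCl E' a → a ∈ E')
    {T' : Set α} {h' : α} (hT'R : (T', h') ∈ F.R) (hT'E : T' ⊆ E')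
    (hh'D : h' ∈ D₂) (hh'₂ : h' ∈ F₂.A) :
    (F.modification F₁ F₂ R₃ E₁ s₀).Attacks (E' ∩ F₂.A) D₂ := by
  have hE₂A : E₂ ⊆ F₂.A := E₂_subset hsplit hs₀ hadm₂
  have hE'F₁ : E' ∩ F₁.A ⊆ E₁ := by
    rintro x ⟨hx, hx₁⟩
    rcases hE'sub hx with h | h
    · exact h
    · exact absurd (hE₂A h) (fun hc => not_both hsplit hx₁ hc)
  obtain ⟨hW₁, hW₂, hdisj, hA, hS, hR, hR₃⟩ := hsplit
  have hsp : F.IsAttackSplitting F₁ F₂ R₃ := ⟨hW₁, hW₂, hdisj, hA, hS, hR, hR₃⟩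
  rw [hR] at hT'R
  rcases hT'R with (h1 | h2) | h3
  · exact absurd (hW₁.1 _ h1).2 (fun hc => not_both hsp hc hh'₂)
  · exact ⟨T', h', mem_mod_of_F2 h2,
      fun t ht => ⟨hT'E ht, (hW₂.1 _ h2).1 ht⟩, hh'D⟩
  · -- an R₃ link; use the closed link through the reduct
    set Tc := F.cl T' with hTc
    have hTcE' : Tc ⊆ E' := fun x hx => hcl' x (incl_mono (fun _ h => h) hT'E hx)
    have hClm : (Tc, h') ∈ F.closedLinks R₃ := ⟨T', h', h3, rfl⟩
    have hA₁c : Tc ∩ attackedBy (F₁.R ∪ F.closedLinks R₃) E₁ = ∅ := by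
      apply Set.eq_empty_iff_forall_notMem.mpr
      rintro y ⟨hy1, hy2⟩
      exact attE hsp hs₀ hadm₁ hadm₂ (hE'sub (hTcE' hy1)) hy2
    have hF₁c : Tc ∩ F₁.A ⊆ E₁ := fun y hy => hE'F₁ ⟨hTcE' hy.1, hy.2⟩
    exact ⟨Tc ∩ F₂.A, h', mem_mod_reduct hClm hA₁c hF₁c,
      fun t ht => ⟨hTcE' ht.1, ht.2⟩, hh'D⟩

/-- `F`-defense transfers to modification-defense for heads in `F₂.A`. -/
theorem keyC {E' : Set α} (hE'sub : E' ⊆ E₁ ∪ E₂) (hE₁sub : E₁ ⊆ E')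
    (hcl' : ∀ a, F.InCl E' a → a ∈ E') (hcf' : F.ConflictFree E')
    {a : α} (ha : a ∈ F₂.A) (hdef : F.Defends E' a) :
    (F.modification F₁ F₂ R₃ E₁ s₀).Defends (E' ∩ F₂.A) a := by
  have hE₂A : E₂ ⊆ F₂.A := E₂_subset hsplit hs₀ hadm₂
  have hE'F₁ : E' ∩ F₁.A ⊆ E₁ := by
    rintro x ⟨hx, hx₁⟩
    rcases hE'sub hx with h | h
    · exact h
    · exact absurd (hE₂A h) (fun hc => not_both hsplit hx₁ hc)
  obtain ⟨hW₁, hW₂, hdisj, hA, hS, hR, hR₃⟩ := hsplit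
  have hsp : F.IsAttackSplitting F₁ F₂ R₃ := ⟨hW₁, hW₂, hdisj, hA, hS, hR, hR₃⟩
  rintro D₂ hD₂A hD₂cl ⟨T, hTa, hTD₂⟩
  have hD₂c : ∀ x, (F.modification F₁ F₂ R₃ E₁ s₀).InCl D₂ x → x ∈ D₂ :=
    fun x hx => mem_of_closed hD₂cl hx
  -- helper applying the F-defense to D := cl_F (K ∪ (D₂ ∩ F₂.A))
  have hbase₂ : ∀ (K : Set α), K ⊆ F₁.A → ∀ {h'},
      F₂.InCl ((K ∪ D₂ ∩ F₂.A) ∩ F₂.A) h' → h' ∈ D₂ := by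
    intro K hK h' hh'
    have hsub : (K ∪ D₂ ∩ F₂.A) ∩ F₂.A ⊆ D₂ := by
      rintro y ⟨hy1 | hy2, hyA⟩
      · exact absurd (hK hy1) (fun hc => not_both hsp hc hyA)
      · exact hy2.1
    exact hD₂c h' (incl_mono (F := F₂) (G := F.modification F₁ F₂ R₃ E₁ s₀) (fun _ h => h) hsub hh')
  have hDA : ∀ (K : Set α), K ⊆ F₁.A → F.cl (K ∪ D₂ ∩ F₂.A) ⊆ F.A := by
    intro K hK x hx
    rcases incl_range hS hW₁ hW₂ hx with h | h | h
    · rcases h with h | h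
      · exact subA₁ hsp (hK h)
      · exact subA₂ hsp h.2
    · exact subA₁ hsp h
    · exact subA₂ hsp h
  have hDcl : ∀ (K : Set α), F.Closed (F.cl (K ∪ D₂ ∩ F₂.A)) :=
    fun K => closed_of fun x hx => incl_idem hx
  rcases hTa with ((h2 | hred) | hself) | hund
  · -- original F₂ attack
    obtain ⟨T', h', hT'R, hT'E, hh'D⟩ := hdef (F.cl (∅ ∪ D₂ ∩ F₂.A))
      (hDA ∅ (by simp)) (hDcl ∅)
      ⟨T, (by rw [hR]; exact Or.inl (Or.inr h2)),
        fun t ht => InCl.base (Or.inr ⟨hTD₂ ht, (hW₂.1 _ h2).1 ht⟩)⟩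
    rcases incl_range hS hW₁ hW₂ hh'D with h | h | h
    · rcases h with h | h
      · exact absurd h (by simp)
      · exact finish₂ hsp hs₀ hadm₁ hadm₂ hE'sub hcl' hT'R hT'E h.1 h.2
    · -- h' in F₁.A: derivable from the empty set, so h' ∈ E', contradicting CF
      have h1 : F₁.InCl ((∅ ∪ D₂ ∩ F₂.A) ∩ F₁.A) h' :=
        ((incl_split hS hW₁ hW₂ hdisj hh'D).1 h)
      have hsub : (∅ ∪ D₂ ∩ F₂.A) ∩ F₁.A ⊆ E' := by
        rintro y ⟨hy1 | hy2, hyA⟩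
        · exact absurd hy1 (by simp)
        · exact absurd hy2.2 (fun hc => not_both hsp hyA hc)
      have : h' ∈ E' := hcl' _ (incl_mono (by rw [hS]; exact Set.subset_union_left) hsub h1)
      exact absurd ⟨T', h', hT'R, hT'E, this⟩ hcf'
    · have h2' : F₂.InCl ((∅ ∪ D₂ ∩ F₂.A) ∩ F₂.A) h' :=
        ((incl_split hS hW₁ hW₂ hdisj hh'D).2 h)
      exact finish₂ hsp hs₀ hadm₁ hadm₂ hE'sub hcl' hT'R hT'E (hbase₂ ∅ (by simp) h2') h
  · -- reduct attack: use K := E₁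
    obtain ⟨Tc, hh, hClm, hA₁c, hF₁c, heq⟩ := hred
    obtain ⟨heq1, heq2⟩ := Prod.mk.injEq .. ▸ heq
    subst heq2
    obtain ⟨⟨T₀, hT₀, hT₀Tc, hTccl⟩, hTcA⟩ := closedLink_tail hsp hClm
    obtain ⟨T', h', hT'R, hT'E, hh'D⟩ := hdef (F.cl (E₁ ∪ D₂ ∩ F₂.A))
      (hDA E₁ hadm₁.1) (hDcl E₁)
      ⟨T₀, (by rw [hR]; exact Or.inr hT₀), fun t ht => by
        rcases hTcA (hT₀Tc ht) with h | h
        · exact InCl.base (Or.inl (hF₁c ⟨hT₀Tc ht, h⟩))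
        · exact InCl.base (Or.inr ⟨hTD₂ (heq1 ▸ ⟨hT₀Tc ht, h⟩), h⟩)⟩
    rcases incl_range hS hW₁ hW₂ hh'D with h | h | h
    · rcases h with h | h
      · exact absurd ⟨T', h', hT'R, hT'E, hE₁sub h⟩ hcf'
      · exact finish₂ hsp hs₀ hadm₁ hadm₂ hE'sub hcl' hT'R hT'E h.1 h.2
    · have h1 : F₁.InCl ((E₁ ∪ D₂ ∩ F₂.A) ∩ F₁.A) h' :=
        ((incl_split hS hW₁ hW₂ hdisj hh'D).1 h)
      have hsub : (E₁ ∪ D₂ ∩ F₂.A) ∩ F₁.A ⊆ E₁ := by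
        rintro y ⟨hy1 | hy2, hyA⟩
        · exact hy1
        · exact absurd hy2.2 (fun hc => not_both hsp hyA hc)
      have hh'E₁ : h' ∈ E₁ := mem_of_closed hadm₁.2.2.1
        (incl_mono (Set.Subset.refl _) hsub h1)
      exact absurd ⟨T', h', hT'R, hT'E, hE₁sub hh'E₁⟩ hcf'
    · have h2' : F₂.InCl ((E₁ ∪ D₂ ∩ F₂.A) ∩ F₂.A) h' :=
        ((incl_split hS hW₁ hW₂ hdisj hh'D).2 h)
      exact finish₂ hsp hs₀ hadm₁ hadm₂ hE'sub hcl' hT'R hT'E (hbase₂ E₁ hadm₁.1 h2') h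
  · -- self-attack on s₀ is impossible here since a ∈ F₂.A
    have hself' : (T, a) = ({s₀}, s₀) := hself
    obtain ⟨-, heq2⟩ := Prod.mk.injEq .. ▸ hself'
    exact absurd (subA₂ hsp (heq2 ▸ ha)) hs₀
  · -- undecided attack: use K := Tc ∩ F₁.A
    obtain ⟨Tc, hh, ⟨hClm, hA₁c, hF₁c⟩, heq⟩ := hund
    obtain ⟨heq1, heq2⟩ := Prod.mk.injEq .. ▸ heq
    subst heq2
    obtain ⟨⟨T₀, hT₀, hT₀Tc, hTccl⟩, hTcA⟩ := closedLink_tail hsp hClm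
    obtain ⟨T', h', hT'R, hT'E, hh'D⟩ := hdef (F.cl (Tc ∩ F₁.A ∪ D₂ ∩ F₂.A))
      (hDA _ Set.inter_subset_right) (hDcl _)
      ⟨T₀, (by rw [hR]; exact Or.inr hT₀), fun t ht => by
        rcases hTcA (hT₀Tc ht) with h | h
        · exact InCl.base (Or.inl ⟨hT₀Tc ht, h⟩)
        · exact InCl.base (Or.inr ⟨hTD₂ (heq1 ▸ Or.inl ⟨hT₀Tc ht, h⟩), h⟩)⟩
    rcases incl_range hS hW₁ hW₂ hh'D with h | h | h
    · rcases h with h | h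
      · -- h' ∈ Tc ∩ F₁.A : then E' attacks h' via F₁, so h' is E₁-attacked, contradiction
        have hF₁R : (T', h') ∈ F₁.R := attack_head₁ hsp hT'R h.2
        have hT'E₁ : T' ⊆ E₁ := fun t ht => hE'F₁ ⟨hT'E ht, (hW₁.1 _ hF₁R).1 ht⟩
        exact absurd ⟨h.1, ⟨T', Or.inl hF₁R, hT'E₁⟩⟩
          (Set.eq_empty_iff_forall_notMem.mp hA₁c h')
      · exact finish₂ hsp hs₀ hadm₁ hadm₂ hE'sub hcl' hT'R hT'E h.1 h.2
    · have h1 : F₁.InCl ((Tc ∩ F₁.A ∪ D₂ ∩ F₂.A) ∩ F₁.A) h' :=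
        ((incl_split hS hW₁ hW₂ hdisj hh'D).1 h)
      have hsub : (Tc ∩ F₁.A ∪ D₂ ∩ F₂.A) ∩ F₁.A ⊆ Tc := by
        rintro y ⟨hy1 | hy2, hyA⟩
        · exact hy1.1
        · exact absurd hy2.2 (fun hc => not_both hsp hyA hc)
      have hh'Tc : h' ∈ Tc := by
        have : F.InCl Tc h' := incl_mono (by rw [hS]; exact Set.subset_union_left) hsub h1
        rw [hTccl] at this ⊢
        exact incl_idem this
      have hF₁R : (T', h') ∈ F₁.R := attack_head₁ hsp hT'R h
      have hT'E₁ : T' ⊆ E₁ := fun t ht => hE'F₁ ⟨hT'E ht, (hW₁.1 _ hF₁R).1 ht⟩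
      exact absurd ⟨hh'Tc, ⟨T', Or.inl hF₁R, hT'E₁⟩⟩
        (Set.eq_empty_iff_forall_notMem.mp hA₁c h')
    · have h2' : F₂.InCl ((Tc ∩ F₁.A ∪ D₂ ∩ F₂.A) ∩ F₂.A) h' :=
        ((incl_split hS hW₁ hW₂ hdisj hh'D).2 h)
      exact finish₂ hsp hs₀ hadm₁ hadm₂ hE'sub hcl' hT'R hT'E
        (hbase₂ _ Set.inter_subset_right h2') h

end Split5
end BSAF
namespace BSAF
section Split6

variable {F F₁ F₂ : BSAF α} {R₃ : Set (Set α × α)} {s₀ : α} {E₁ E₂ : Set α}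
variable (hsplit : F.IsAttackSplitting F₁ F₂ R₃) (hs₀ : s₀ ∉ F.A)

include hsplit hs₀

/-- modification-defense transfers to `F`-defense for heads in `F₂.A`. -/
theorem keyD {E' : Set α} (hE₁sub : E₁ ⊆ E')
    {a : α} (ha : a ∈ F₂.A)
    (hdef2 : (F.modification F₁ F₂ R₃ E₁ s₀).Defends (E' ∩ F₂.A) a) :
    F.Defends E' a := by
  obtain ⟨hW₁, hW₂, hdisj, hA, hS, hR, hR₃⟩ := hsplit
  have hsp : F.IsAttackSplitting F₁ F₂ R₃ := ⟨hW₁, hW₂, hdisj, hA, hS, hR, hR₃⟩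
  rintro D hDA hDcl ⟨T, hTa, hTD⟩
  have hDc : ∀ x, F.InCl D x → x ∈ D := fun x hx => mem_of_closed hDcl hx
  -- helper: invoke the modification defense on D ∩ F₂.A ∪ X and translate back
  have useDef : ∀ X : Set α, X ⊆ {s₀} → X ∩ F₂.A ⊆ D →
      (∃ T'', (T'', a) ∈ (F.modification F₁ F₂ R₃ E₁ s₀).R ∧ T'' ⊆ D ∩ F₂.A ∪ X) →
      F.Attacks E' D := by
    rintro X hXs hXD ⟨T'', hm'', hsub''⟩
    have hcl₂ := closed_of (closed_inter₂ (E₁ := E₁) (s₀ := s₀) hsp hDc hXD)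
    have hD₂A : D ∩ F₂.A ∪ X ⊆ (F.modification F₁ F₂ R₃ E₁ s₀).A := by
      rintro y (hy | hy)
      · exact Or.inl hy.2
      · exact Or.inr (hXs hy)
    obtain ⟨T', h', hm, hT'E, hh'⟩ := hdef2 _ hD₂A hcl₂ ⟨T'', hm'', hsub''⟩
    have hh'F₂ : h' ∈ F₂.A := mod_head_mem hsp hs₀ hm hT'E Set.inter_subset_right
    have hh'D : h' ∈ D := by
      rcases hh' with h | h
      · exact h.1
      · exact absurd (subA₂ hsp ((hXs h) ▸ hh'F₂)) hs₀
    obtain ⟨T₀, hmF, hT₀⟩ := translate hsp hs₀ hm hT'E Set.inter_subset_right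
    refine ⟨T₀, h', hmF, fun t ht => ?_, hh'D⟩
    rcases hT₀ ht with h | h
    · exact hE₁sub h
    · exact h.1
  rw [hR] at hTa
  rcases hTa with (h1 | h2) | h3
  · exact absurd (hW₁.1 _ h1).2 (fun hc => not_both hsp hc ha)
  · exact useDef ∅ (by simp) (by simp)
      ⟨T, mem_mod_of_F2 h2, fun t ht => Or.inl ⟨hTD ht, (hW₂.1 _ h2).1 ht⟩⟩
  · set Tc := F.cl T with hTc
    have hTcD : Tc ⊆ D := fun x hx => hDc x (incl_mono (fun _ h => h) hTD hx)
    have hClm : (Tc, a) ∈ F.closedLinks R₃ := ⟨T, a, h3, rfl⟩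
    by_cases hA₁c : Tc ∩ attackedBy (F₁.R ∪ F.closedLinks R₃) E₁ = ∅
    · by_cases hF₁c : Tc ∩ F₁.A ⊆ E₁
      · exact useDef ∅ (by simp) (by simp)
          ⟨Tc ∩ F₂.A, mem_mod_reduct hClm hA₁c hF₁c,
            fun t ht => Or.inl ⟨hTcD ht.1, ht.2⟩⟩
      · refine useDef {s₀} (Set.Subset.refl _)
          (fun y hy => absurd (hs₀ (subA₂ hsp (hy.1 ▸ hy.2))) (by simp)) ?_
        refine ⟨(Tc ∩ F₂.A) ∪ {s₀}, mem_mod_undec hClm hA₁c hF₁c, ?_⟩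
        rintro t (ht | ht)
        · exact Or.inl ⟨hTcD ht.1, ht.2⟩
        · exact Or.inr ht
    · -- some element of Tc ⊆ D is attacked by E₁ : direct F-attack on D
      obtain ⟨x, hxTc, T', hm', hT'E₁⟩ :=
        Set.nonempty_iff_ne_empty.mpr hA₁c
      rcases hm' with h1' | h3'
      · exact ⟨T', x, (by rw [hR]; exact Or.inl (Or.inl h1')),
          fun t ht => hE₁sub (hT'E₁ ht), hTcD hxTc⟩
      · obtain ⟨⟨T₀', hT₀', hT₀'T', -⟩, -⟩ := closedLink_tail hsp h3'
        exact ⟨T₀', x, (by rw [hR]; exact Or.inr hT₀'),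
          fun t ht => hE₁sub (hT'E₁ (hT₀'T' ht)), hTcD hxTc⟩

end Split6
end BSAF

/-- Attack splitting for grounded semantics: one direction. -/
theorem BSAF.attackSplitting_grounded (F F₁ F₂ : BSAF α) (R₃ : Set (Set α × α))
    (hsplit : F.IsAttackSplitting F₁ F₂ R₃) (hfin : F.A.Finite)
    (s₀ : α) (hs₀ : s₀ ∉ F.A) :
    ∀ E₁ E₂ : Set α, F₁.Grounded E₁ →
      (F.modification F₁ F₂ R₃ E₁ s₀).Grounded E₂ → F.Grounded (E₁ ∪ E₂) := by
  intro E₁ E₂ hG₁ hG₂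
  obtain ⟨hC₁, hmin₁⟩ := hG₁
  obtain ⟨hC₂, hmin₂⟩ := hG₂
  have hadm₁ := hC₁.1
  have hadm₂ := hC₂.1
  obtain ⟨hW₁, hW₂, hdisj, hA, hS, hR, hR₃⟩ := hsplit
  have hsp : F.IsAttackSplitting F₁ F₂ R₃ := ⟨hW₁, hW₂, hdisj, hA, hS, hR, hR₃⟩
  have hE₁A : E₁ ⊆ F₁.A := hadm₁.1
  have hE₂A : E₂ ⊆ F₂.A := E₂_subset hsp hs₀ hadm₂
  set E : Set α := E₁ ∪ E₂ with hE
  have hEA : E ⊆ F.A := by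
    rintro x (h | h)
    · exact subA₁ hsp (hE₁A h)
    · exact subA₂ hsp (hE₂A h)
  have hEinter₁ : E ∩ F₁.A = E₁ := by
    apply Set.eq_of_subset_of_subset
    · rintro x ⟨hx | hx, hxA⟩
      · exact hx
      · exact absurd (hE₂A hx) (fun hc => not_both hsp hxA hc)
    · exact fun x hx => ⟨Or.inl hx, hE₁A hx⟩
  have hEinter₂ : E ∩ F₂.A = E₂ := by
    apply Set.eq_of_subset_of_subset
    · rintro x ⟨hx | hx, hxA⟩
      · exact absurd (hE₁A hx) (fun hc => not_both hsp hc hxA)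
      · exact hx
    · exact fun x hx => ⟨Or.inr hx, hE₂A hx⟩
  -- E is closed in F
  have hEcl : ∀ a, F.InCl E a → a ∈ E := by
    intro a haE
    rcases incl_range hS hW₁ hW₂ haE with h | h | h
    · exact h
    · have := (incl_split hS hW₁ hW₂ hdisj haE).1 h
      rw [hEinter₁] at this
      exact Or.inl (mem_of_closed hadm₁.2.2.1 this)
    · have := (incl_split hS hW₁ hW₂ hdisj haE).2 h
      rw [hEinter₂] at this
      refine Or.inr (mem_of_closed hadm₂.2.2.1
        (incl_mono (F := F₂) (G := F.modification F₁ F₂ R₃ E₁ s₀)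
          (fun _ h => h) (Set.Subset.refl _) this))
  -- E is conflict-free in F
  have hEcf : F.ConflictFree E := by
    rintro ⟨T, h, hTR, hTE, hhE⟩
    rw [hR] at hTR
    rcases hTR with (h1 | h2) | h3
    · have hT₁ : T ⊆ E₁ := fun t ht => hEinter₁ ▸ ⟨hTE ht, (hW₁.1 _ h1).1 ht⟩
      have hh₁ : h ∈ E₁ := hEinter₁ ▸ ⟨hhE, (hW₁.1 _ h1).2⟩
      exact hadm₁.2.1 ⟨T, h, h1, hT₁, hh₁⟩
    · have hT₂ : T ⊆ E₂ := fun t ht => hEinter₂ ▸ ⟨hTE ht, (hW₂.1 _ h2).1 ht⟩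
      have hh₂ : h ∈ E₂ := hEinter₂ ▸ ⟨hhE, (hW₂.1 _ h2).2⟩
      exact hadm₂.2.1 ⟨T, h, mem_mod_of_F2 h2, hT₂, hh₂⟩
    · have hh₂ : h ∈ E₂ := hEinter₂ ▸ ⟨hhE, (hR₃ _ h3).2.2⟩
      have hClm : (F.cl T, h) ∈ F.closedLinks R₃ := ⟨T, h, h3, rfl⟩
      have hTcE : F.cl T ⊆ E := fun x hx => hEcl x (incl_mono (fun _ h => h) hTE hx)
      have hA₁c : F.cl T ∩ attackedBy (F₁.R ∪ F.closedLinks R₃) E₁ = ∅ := by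
        apply Set.eq_empty_iff_forall_notMem.mpr
        rintro y ⟨hy1, hy2⟩
        exact attE hsp hs₀ hadm₁ hadm₂ (hTcE hy1) hy2
      have hF₁c : F.cl T ∩ F₁.A ⊆ E₁ := fun y hy => hEinter₁ ▸ ⟨hTcE hy.1, hy.2⟩
      refine hadm₂.2.1 ⟨F.cl T ∩ F₂.A, h, mem_mod_reduct hClm hA₁c hF₁c,
        fun t ht => ?_, hh₂⟩
      exact hEinter₂ ▸ ⟨hTcE ht.1, ht.2⟩
  have hEclosed : F.Closed E := closed_of hEcl
  -- E is complete in F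
  have hEcomplete : F.Complete E := by
    refine ⟨⟨hEA, hEcf, hEclosed, fun a haE => ?_⟩, fun a haA hdef => ?_⟩
    · rcases haE with h | h
      · have := hadm₁.2.2.2 a h
        rw [← hEinter₁] at this
        exact keyB hsp (hE₁A h) this
      · have := hadm₂.2.2.2 a h
        rw [← hEinter₂] at this
        exact keyD hsp hs₀ Set.subset_union_left (hE₂A h) this
    · rw [hA] at haA
      rcases haA with h | h
      · have := keyA hsp hEcl hEcf h hdef
        rw [hEinter₁] at this
        exact Or.inl (hC₁.2 a h this)
      · have := keyC hsp hs₀ hadm₁ hadm₂ (Set.Subset.refl _) Set.subset_union_left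
          hEcl hEcf h hdef
        rw [hEinter₂] at this
        exact Or.inr (hC₂.2 a (Or.inl h) this)
  refine ⟨hEcomplete, ?_⟩
  -- minimality
  intro E' hE'C hE'E
  have hE'A : E' ⊆ F.A := hE'C.1.1
  have hcf' : F.ConflictFree E' := hE'C.1.2.1
  have hcl' : ∀ a, F.InCl E' a → a ∈ E' := fun a ha => mem_of_closed hE'C.1.2.2.1 ha
  have hE'F₁sub : E' ∩ F₁.A ⊆ E₁ := by
    rintro x ⟨hx, hxA⟩
    rcases hE'E hx with h | h
    · exact h
    · exact absurd (hE₂A h) (fun hc => not_both hsp hxA hc)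
  -- E' ∩ F₁.A is complete in F₁
  have hE₁'C : F₁.Complete (E' ∩ F₁.A) := by
    refine ⟨⟨Set.inter_subset_right, ?_, ?_, fun a haE => ?_⟩, fun a haA hdef => ?_⟩
    · rintro ⟨T, h, hTR, hTE, hhE⟩
      exact hcf' ⟨T, h, (by rw [hR]; exact Or.inl (Or.inl hTR)),
        fun t ht => (hTE ht).1, hhE.1⟩
    · exact closed_of (closed_inter₁ hsp hcl')
    · exact keyA hsp hcl' hcf' haE.2 (hE'C.1.2.2.2 a haE.1)
    · exact ⟨hE'C.2 a (subA₁ hsp haA) (keyB hsp haA hdef), haA⟩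
  have hE₁eq : E' ∩ F₁.A = E₁ := hmin₁ _ hE₁'C hE'F₁sub
  have hE₁sub' : E₁ ⊆ E' := fun x hx => (hE₁eq ▸ hx : x ∈ E' ∩ F₁.A).1
  -- E' ∩ F₂.A is complete in the modification
  have hE₂'C : (F.modification F₁ F₂ R₃ E₁ s₀).Complete (E' ∩ F₂.A) := by
    refine ⟨⟨fun x hx => Or.inl hx.2, ?_, ?_, fun a haE => ?_⟩, fun a haA hdef => ?_⟩
    · rintro ⟨T, h, hTR, hTE, hhE⟩
      obtain ⟨T₀, hmF, hT₀⟩ := translate hsp hs₀ hTR hTE Set.inter_subset_right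
      refine hcf' ⟨T₀, h, hmF, fun t ht => ?_, hhE.1⟩
      rcases hT₀ ht with h' | h'
      · exact hE₁sub' h'
      · exact h'.1
    · have := closed_inter₂ (E₁ := E₁) (s₀ := s₀) hsp hcl'
        (X := (∅ : Set α)) (by simp)
      apply closed_of
      intro a haIn
      have h' := this a (by rwa [Set.union_empty])
      rwa [Set.union_empty] at h'
    · exact keyC hsp hs₀ hadm₁ hadm₂ hE'E hE₁sub' hcl' hcf' haE.2
        (hE'C.1.2.2.2 a haE.1)
    · rcases haA with h | h
      · exact ⟨hE'C.2 a (subA₂ hsp h) (keyD hsp hs₀ hE₁sub' h hdef), h⟩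
      · -- a = s₀ : impossible, since s₀'s self-attack cannot be countered
        exfalso
        have haeq : a = s₀ := h
        -- the closed attacker D := (cl_F ∅ ∩ F₂.A) ∪ {s₀}
        have hCc : ∀ x, F.InCl (F.cl (∅ : Set α)) x → x ∈ F.cl (∅ : Set α) :=
          fun x hx => incl_idem hx
        have hDcl := closed_of (closed_inter₂ (E₁ := E₁) (s₀ := s₀) hsp hCc
          (X := ({s₀} : Set α)) (fun y hy => absurd (hs₀ (subA₂ hsp (hy.1 ▸ hy.2))) (by simp)))
        have hD₂A : F.cl (∅ : Set α) ∩ F₂.A ∪ {s₀} ⊆ (F.modification F₁ F₂ R₃ E₁ s₀).A := by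
          rintro y (hy | hy)
          · exact Or.inl hy.2
          · exact Or.inr hy
        obtain ⟨T', h', hm, hT'E, hh'⟩ := hdef _ hD₂A hDcl
          ⟨{s₀}, by rw [haeq]; exact mem_mod_self, fun t ht => Or.inr ht⟩
        have hh'F₂ : h' ∈ F₂.A := mod_head_mem hsp hs₀ hm hT'E Set.inter_subset_right
        have hh'E' : h' ∈ E' := by
          rcases hh' with hy | hy
          · exact hcl' _ (incl_mono (fun _ h => h) (by simp) hy.1)
          · exact absurd (subA₂ hsp (hy ▸ hh'F₂)) hs₀
        obtain ⟨T₀, hmF, hT₀⟩ := translate hsp hs₀ hm hT'E Set.inter_subset_right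
        refine hcf' ⟨T₀, h', hmF, fun t ht => ?_, hh'E'⟩
        rcases hT₀ ht with h' | h'
        · exact hE₁sub' h'
        · exact h'.1
  have hE₂eq : E' ∩ F₂.A = E₂ := hmin₂ _ hE₂'C (by
    rintro x ⟨hx, hxA⟩
    rcases hE'E hx with h | h
    · exact absurd (hE₁A h) (fun hc => not_both hsp hc hxA)
    · exact h)
  apply Set.eq_of_subset_of_subset hE'E
  rintro x (hx | hx)
  · exact hE₁sub' hx
  · exact (hE₂eq ▸ hx : x ∈ E' ∩ F₂.A).1
end

section
/- There exists a BSAF F with an attack splitting (F₁,F₂,R₃) and a grounded extension E of F such that E ∩ A₁ is not a grounded extension of F₁. Concretely: let A = {a,b,c,d,e}, R = {({a},b), ({b},a), ({a},c), ({c},e)}, S = {({d},e)}, A₁ = {a,b}, A₂ = {c,d,e}, R₃ = {({a},c)}. Then E = {a,d,e} is the unique grounded extension of F, but E ∩ A₁ = {a} is not grounded in F₁ (whose grounded extension is ∅). -/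
variable {α : Type*}

/-!
In `F` the argument `d` is unattacked, so it lies in every complete extension, and the support
`({d}, e)` then puts `e` there as well. The only attack on `e` comes from the closed set `{c}`, and
the only attack on `c` comes from `a`, so defending `e` forces `a` in: `{a, d, e}` is the least
complete extension of `F`. In `F₁` alone, `a` and `b` attack each other and nothing defends either
of them, so `∅` is its least complete extension and `{a}` is not minimal.
-/

namespace BSAF

variable {F : BSAF α} {E G T : Set α} {a b : α}

theorem closed_of_forall_support (h : ∀ T b, (T, b) ∈ F.S → T ⊆ E → b ∈ E) : F.Closed E := by
  refine Set.Subset.antisymm (fun a ha => ?_) fun a ha => InCl.base ha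
  induction ha with
  | base ha => exact ha
  | step hS _ ih => exact h _ _ hS ih

theorem Closed.mem_of_support (hE : F.Closed E) (hS : (T, b) ∈ F.S) (hT : T ⊆ E) : b ∈ E :=
  hE ▸ InCl.step hS fun _ ht => InCl.base (hT ht)

theorem attacks_singleton_iff : F.Attacks E {a} ↔ ∃ T, (T, a) ∈ F.R ∧ T ⊆ E := by
  simp [Attacks]

theorem Complete.mem_of_unattacked (hE : F.Complete E) (ha : a ∈ F.A)
    (hR : ∀ T, (T, a) ∉ F.R) : a ∈ E :=
  hE.2 a ha fun _ _ _ ⟨T, hT, _⟩ => absurd hT (hR T)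

theorem complete_empty (hR : ∀ b, (∅, b) ∉ F.R) (hS : ∀ b, (∅, b) ∉ F.S)
    (hA : ∀ a ∈ F.A, ∃ D ⊆ F.A, F.Closed D ∧ ∃ T, (T, a) ∈ F.R ∧ T ⊆ D) :
    F.Complete ∅ := by
  have not_attacks : ∀ D, ¬ F.Attacks ∅ D := fun _ ⟨T, b, hT, hT0, _⟩ =>
    hR b (Set.subset_empty_iff.mp hT0 ▸ hT)
  refine ⟨⟨Set.empty_subset _, fun ⟨T, b, hT, hT0, _⟩ => not_attacks {b} ⟨T, b, hT, hT0, rfl⟩,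
    closed_of_forall_support fun T b hT hT0 => ?_, fun _ h => h.elim⟩, fun a ha hdef => ?_⟩
  · exact hS b (Set.subset_empty_iff.mp hT0 ▸ hT)
  · obtain ⟨D, hDA, hD, hatt⟩ := hA a ha
    exact (not_attacks D (hdef D hDA hD hatt)).elim

theorem grounded_of_isLeast (h : IsLeast {E | F.Complete E} E) : F.Grounded E :=
  ⟨h.1, fun _ hE' hsub => hsub.antisymm (h.2 hE')⟩

theorem Grounded.eq_of_isLeast (hG : F.Grounded G) (h : IsLeast {E | F.Complete E} E) :
    G = E :=
  (hG.2 E h.1 (h.2 hG.1)).symm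

end BSAF

namespace BSAF.GroundedProjection

/-- Arguments `a, b, c, d, e` are encoded as `0, 1, 2, 3, 4`. -/
def F : BSAF (Fin 5) :=
  ⟨Set.univ, {({0}, 1), ({1}, 0), ({0}, 2), ({2}, 4)}, {({3}, 4)}⟩

def F₁ : BSAF (Fin 5) := ⟨{0, 1}, {({0}, 1), ({1}, 0)}, ∅⟩

def F₂ : BSAF (Fin 5) := ⟨{2, 3, 4}, {({2}, 4)}, {({3}, 4)}⟩

def R₃ : Set (Set (Fin 5) × Fin 5) := {({0}, 2)}

theorem isAttackSplitting : F.IsAttackSplitting F₁ F₂ R₃ := by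
  refine ⟨⟨?_, ?_⟩, ⟨?_, ?_⟩, ?_, ?_, ?_, ?_, ?_⟩ <;> simp [F, F₁, F₂, R₃]
  · exact Set.eq_empty_of_forall_notMem fun x => by fin_cases x <;> simp
  · exact (Set.eq_univ_of_forall fun x => by fin_cases x <;> simp).symm
  · ext p
    simp only [Set.mem_insert_iff, Set.mem_singleton_iff]
    tauto

theorem closed_singleton {x : Fin 5} (hx : x ≠ 3) : F.Closed {x} :=
  closed_of_forall_support fun T b hT hTx => by
    obtain ⟨rfl, rfl⟩ : T = {3} ∧ b = 4 := by simpa [F] using hT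
    exact (hx (Set.eq_of_mem_singleton (hTx rfl)).symm).elim

theorem complete_ade : F.Complete {0, 3, 4} := by
  refine ⟨⟨Set.subset_univ _, ?conflictFree, ?closed, ?defends⟩, ?containsDefended⟩
  case conflictFree =>
    rintro ⟨T, b, hT, hTE, hb⟩
    simp only [F, Set.mem_insert_iff, Set.mem_singleton_iff, Prod.mk.injEq] at hT
    rcases hT with ⟨rfl, rfl⟩ | ⟨rfl, rfl⟩ | ⟨rfl, rfl⟩ | ⟨rfl, rfl⟩ <;>
      simp_all [Set.singleton_subset_iff]
  case closed =>
    refine closed_of_forall_support fun T b hT _ => ?_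
    obtain ⟨rfl, rfl⟩ : T = {3} ∧ b = 4 := by simpa [F] using hT
    simp
  case defends =>
    rintro a ha D - - ⟨T, hT, hTD⟩
    simp only [Set.mem_insert_iff, Set.mem_singleton_iff] at ha
    rcases ha with rfl | rfl | rfl
    · obtain rfl : T = {1} := by simpa [F] using hT
      exact ⟨{0}, 1, by simp [F], by simp, hTD rfl⟩
    · simp [F] at hT
    · obtain rfl : T = {2} := by simpa [F] using hT
      exact ⟨{0}, 2, by simp [F], by simp, hTD rfl⟩
  case containsDefended =>
    intro a _ hdef
    by_contra ha
    have hR : (({0} : Set (Fin 5)), a) ∈ F.R := by fin_cases a <;> simp_all [F]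
    obtain ⟨T, hT, hTE⟩ := attacks_singleton_iff.mp
      (hdef {0} (Set.subset_univ _) (closed_singleton (by decide)) ⟨{0}, hR, subset_rfl⟩)
    obtain rfl : T = {1} := by simpa [F] using hT
    simpa using hTE rfl

theorem subset_of_complete {E : Set (Fin 5)} (hE : F.Complete E) : {0, 3, 4} ⊆ E := by
  have h3 : 3 ∈ E := hE.mem_of_unattacked trivial fun T hT => by simp [F] at hT
  obtain ⟨⟨-, -, hclosed, hdefends⟩, -⟩ := hE
  have h4 : 4 ∈ E := hclosed.mem_of_support (T := {3}) (by simp [F]) (by simpa using h3)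
  have h0 : 0 ∈ E := by
    obtain ⟨T, hT, hTE⟩ := attacks_singleton_iff.mp (hdefends 4 h4 {2} (Set.subset_univ _)
      (closed_singleton (by decide)) ⟨{2}, by simp [F], subset_rfl⟩)
    obtain rfl : T = {0} := by simpa [F] using hT
    exact hTE rfl
  simp [Set.insert_subset_iff, h0, h3, h4]

theorem isLeast_ade : IsLeast {E | F.Complete E} {0, 3, 4} :=
  ⟨complete_ade, fun _ => subset_of_complete⟩

theorem isLeast_empty : IsLeast {E | F₁.Complete E} ∅ := by
  refine ⟨complete_empty (by simp [F₁]) (by simp [F₁]) fun a ha => ?_,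
    fun _ _ => Set.empty_subset _⟩
  have closed (D : Set (Fin 5)) : F₁.Closed D :=
    closed_of_forall_support fun _ _ hS _ => by simp [F₁] at hS
  obtain rfl | rfl : a = 0 ∨ a = 1 := by simpa [F₁] using ha
  · exact ⟨{1}, by simp [F₁], closed _, {1}, by simp [F₁], subset_rfl⟩
  · exact ⟨{0}, by simp [F₁], closed _, {0}, by simp [F₁], subset_rfl⟩

end BSAF.GroundedProjection

/-- Counterexample: the restriction of a grounded extension to `A₁` need not be
grounded in `F₁`.  Arguments: `a = 0, b = 1, c = 2, d = 3, e = 4`. -/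
theorem BSAF.grounded_projection_fails :
    ∃ (F F₁ F₂ : BSAF (Fin 5)) (R₃ : Set (Set (Fin 5) × Fin 5)),
      F = ⟨Set.univ,
            {(({0} : Set (Fin 5)), (1 : Fin 5)), (({1} : Set (Fin 5)), (0 : Fin 5)),
             (({0} : Set (Fin 5)), (2 : Fin 5)), (({2} : Set (Fin 5)), (4 : Fin 5))},
            {(({3} : Set (Fin 5)), (4 : Fin 5))}⟩ ∧
      F₁ = ⟨({0, 1} : Set (Fin 5)),
            {(({0} : Set (Fin 5)), (1 : Fin 5)), (({1} : Set (Fin 5)), (0 : Fin 5))},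
            (∅ : Set (Set (Fin 5) × Fin 5))⟩ ∧
      F₂ = ⟨({2, 3, 4} : Set (Fin 5)),
            {(({2} : Set (Fin 5)), (4 : Fin 5))},
            {(({3} : Set (Fin 5)), (4 : Fin 5))}⟩ ∧
      R₃ = {(({0} : Set (Fin 5)), (2 : Fin 5))} ∧
      F.IsAttackSplitting F₁ F₂ R₃ ∧
      F.Grounded ({0, 3, 4} : Set (Fin 5)) ∧
      (∀ G : Set (Fin 5), F.Grounded G → G = ({0, 3, 4} : Set (Fin 5))) ∧
      ¬ F₁.Grounded ({0} : Set (Fin 5)) ∧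
      F₁.Grounded (∅ : Set (Fin 5)) := by
  open BSAF.GroundedProjection in
  exact ⟨F, F₁, F₂, R₃, rfl, rfl, rfl, rfl, isAttackSplitting, grounded_of_isLeast isLeast_ade,
    fun _ hG => hG.eq_of_isLeast isLeast_ade,
    fun h => Set.singleton_ne_empty 0 (h.eq_of_isLeast isLeast_empty),
    grounded_of_isLeast isLeast_empty⟩
end

section
/- Support splitting closure lemma: Let (F₁,F₂,S₃) be a support splitting of BSAF F, and F₂^{E₁} the S-reduct of F₂ w.r.t. E₁. (1) If E₁ ∈ adm(F₁) and E₂ ∈ adm(F₂^{E₁}), then E = E₁ ∪ (E₂ \ {*₂}) is closed in F. (2) If E ∈ adm(F), then E ∩ A₁ is closed in F₁ and E ∩ A₂ is closed in F₂^{E₁}. -/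
variable {α : Type*}

namespace BSAF

/-- `(F₁, F₂, S₃)` is a support splitting of `F`. -/
def IsSupportSplitting (F F₁ F₂ : BSAF α) (S₃ : Set (Set α × α)) : Prop :=
  F₁.WithinA ∧ F₂.WithinA ∧
  F₁.A ∩ F₂.A = ∅ ∧ F.A = F₁.A ∪ F₂.A ∧
  F.R = F₁.R ∪ F₂.R ∧
  F.S = F₁.S ∪ F₂.S ∪ S₃ ∧
  ∀ p ∈ S₃, (p.1 ∩ F₂.A).Nonempty ∧ p.1 ⊆ F.A ∧ p.2 ∈ F₁.A

/-- Support-incompatible sets `𝒯_{S₃}(E₁)`. -/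
def suppIncompatible (F₁ : BSAF α) (S₃ : Set (Set α × α)) (E₁ : Set α) : Set (Set α) :=
  {T | ∃ h ∈ F₁.A, (T, h) ∈ S₃ ∧ T ∩ F₁.A ⊆ E₁ ∧ h ∉ E₁}

/-- Closure-defeated sets `𝒟_{S₃}(E₁)`. -/
def closureDefeated (F F₁ : BSAF α) (S₃ : Set (Set α × α)) (E₁ : Set α) : Set (Set α) :=
  {T | T ∈ suppIncompatible F₁ S₃ E₁ ∧ T ∩ F₁.A = ∅ ∧
    (F.cl T ∩ attackedBy F.R E₁).Nonempty}

/-- Componentwise union of two BSAFs. -/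
def bunion (G H : BSAF α) : BSAF α := ⟨G.A ∪ H.A, G.R ∪ H.R, G.S ∪ H.S⟩

open Classical in
/-- Type-1-modification of `F₂` with fresh argument `s₁`. -/
noncomputable def type1Mod (F F₁ F₂ : BSAF α) (S₃ : Set (Set α × α)) (E₁ : Set α)
    (s₁ : α) : BSAF α :=
  if F.closureDefeated F₁ S₃ E₁ = ∅ then F₂ else
    ⟨F₂.A ∪ {s₁}, F₂.R ∪ {((∅ : Set α), s₁)},
      F₂.S ∪ {p | ∃ T ∈ F.closureDefeated F₁ S₃ E₁, p = (T ∩ F₂.A, s₁)}⟩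

open Classical in
/-- Type-2-modification of `F₂` with fresh argument `s₂`. -/
noncomputable def type2Mod (F F₁ F₂ : BSAF α) (S₃ : Set (Set α × α)) (E₁ : Set α)
    (s₂ : α) : BSAF α :=
  if suppIncompatible F₁ S₃ E₁ \ F.closureDefeated F₁ S₃ E₁ = ∅ then F₂ else
    ⟨F₂.A ∪ {s₂},
      F₂.R ∪ {p | ∃ T ∈ suppIncompatible F₁ S₃ E₁ \ F.closureDefeated F₁ S₃ E₁,
        p = ((T ∩ F₂.A) ∪ {s₂}, s₂)},
      F₂.S ∪ {p | ∃ T ∈ suppIncompatible F₁ S₃ E₁ \ F.closureDefeated F₁ S₃ E₁,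
        p = (T ∩ F₂.A, s₂)}⟩

/-- The `(E₁, S₃)`-reduct (S-reduct) of `F₂`: union of type-1 and type-2 modifications. -/
noncomputable def Sreduct (F F₁ F₂ : BSAF α) (S₃ : Set (Set α × α)) (E₁ : Set α)
    (s₁ s₂ : α) : BSAF α :=
  bunion (F.type1Mod F₁ F₂ S₃ E₁ s₁) (F.type2Mod F₁ F₂ S₃ E₁ s₂)

end BSAF

namespace BSAF

variable {F F₁ F₂ G : BSAF α} {S₃ : Set (Set α × α)} {E E₁ E₂ B : Set α} {s₁ s₂ : α}

theorem closed_iff : G.Closed E ↔ ∀ T h, (T, h) ∈ G.S → T ⊆ E → h ∈ E := by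
  refine ⟨fun hE T h hTh hTE => ?_, fun hE => ?_⟩
  · rw [← hE]
    exact InCl.step hTh fun t ht => .base (hTE ht)
  · refine Set.Subset.antisymm (fun a ha => ?_) fun a ha => .base ha
    induction ha with
    | base ha => exact ha
    | step hTh _ ih => exact hE _ _ hTh ih

theorem Closed.inter_of_S_subset (hE : F.Closed E) (hGF : G.S ⊆ F.S)
    (hB : ∀ p ∈ G.S, p.2 ∈ B) : G.Closed (E ∩ B) :=
  closed_iff.2 fun T h hTh hTE =>
    ⟨closed_iff.1 hE T h (hGF hTh) fun _ ht => (hTE ht).1, hB _ hTh⟩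

theorem Sreduct_A_subset :
    (F.Sreduct F₁ F₂ S₃ E₁ s₁ s₂).A ⊆ F₂.A ∪ {s₁, s₂} := by
  unfold Sreduct bunion type1Mod type2Mod
  split_ifs <;> intro a ha <;> simp at ha ⊢ <;> tauto

theorem S_subset_Sreduct_S : F₂.S ⊆ (F.Sreduct F₁ F₂ S₃ E₁ s₁ s₂).S := by
  unfold Sreduct bunion type1Mod type2Mod
  split_ifs <;> intro p hp <;> simp <;> tauto

theorem mem_Sreduct_S {p : Set α × α} (hp : p ∈ (F.Sreduct F₁ F₂ S₃ E₁ s₁ s₂).S) :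
    p ∈ F₂.S ∨ ∃ T ∈ suppIncompatible F₁ S₃ E₁, p.1 = T ∩ F₂.A := by
  unfold Sreduct bunion type1Mod type2Mod at hp
  split_ifs at hp <;> aesop (add simp closureDefeated)

theorem closureDefeated_mem_Sreduct {T : Set α} (hT : T ∈ F.closureDefeated F₁ S₃ E₁) :
    (T ∩ F₂.A, s₁) ∈ (F.Sreduct F₁ F₂ S₃ E₁ s₁ s₂).S ∧
      ((∅ : Set α), s₁) ∈ (F.Sreduct F₁ F₂ S₃ E₁ s₁ s₂).R := by
  unfold Sreduct bunion type1Mod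
  rw [if_neg (Set.nonempty_iff_ne_empty.1 ⟨T, hT⟩)]
  exact ⟨.inl (.inr ⟨T, hT, rfl⟩), .inl (.inr rfl)⟩

theorem undefeated_mem_Sreduct {T : Set α}
    (hT : T ∈ suppIncompatible F₁ S₃ E₁ \ F.closureDefeated F₁ S₃ E₁) :
    (T ∩ F₂.A, s₂) ∈ (F.Sreduct F₁ F₂ S₃ E₁ s₁ s₂).S ∧
      ((T ∩ F₂.A) ∪ {s₂}, s₂) ∈ (F.Sreduct F₁ F₂ S₃ E₁ s₁ s₂).R := by
  unfold Sreduct bunion type2Mod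
  rw [if_neg (Set.nonempty_iff_ne_empty.1 ⟨T, hT⟩)]
  exact ⟨.inr (.inr ⟨T, hT, rfl⟩), .inr (.inr ⟨T, hT, rfl⟩)⟩

/-- A closed conflict-free set of the S-reduct cannot contain the `A₂`-part of a
support-incompatible tail: it would then contain `*₁`, which is attacked by `∅`, or `*₂`
together with the tail of the self-attack on `*₂`. -/
theorem Sreduct_inter_not_subset {T : Set α} (hT : T ∈ suppIncompatible F₁ S₃ E₁)
    (hcf : (F.Sreduct F₁ F₂ S₃ E₁ s₁ s₂).ConflictFree E₂)
    (hcl : (F.Sreduct F₁ F₂ S₃ E₁ s₁ s₂).Closed E₂) : ¬ T ∩ F₂.A ⊆ E₂ := by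
  intro hTE
  by_cases hD : T ∈ F.closureDefeated F₁ S₃ E₁
  · obtain ⟨hS, hR⟩ := closureDefeated_mem_Sreduct (F₂ := F₂) (s₂ := s₂) hD
    exact hcf ⟨∅, s₁, hR, Set.empty_subset _, closed_iff.1 hcl _ _ hS hTE⟩
  · obtain ⟨hS, hR⟩ := undefeated_mem_Sreduct (F₂ := F₂) (s₁ := s₁) ⟨hT, hD⟩
    have hs₂ : s₂ ∈ E₂ := closed_iff.1 hcl _ _ hS hTE
    exact hcf ⟨_, s₂, hR, Set.union_subset hTE (Set.singleton_subset_iff.2 hs₂), hs₂⟩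

namespace IsSupportSplitting

theorem closed_union_sdiff (hsplit : F.IsSupportSplitting F₁ F₂ S₃)
    (hs₁ : s₁ ∉ F.A) (hs₂ : s₂ ∉ F.A) (hE₁ : E₁ ⊆ F₁.A) (hcl₁ : F₁.Closed E₁)
    (hE₂ : E₂ ⊆ (F.Sreduct F₁ F₂ S₃ E₁ s₁ s₂).A)
    (hcf₂ : (F.Sreduct F₁ F₂ S₃ E₁ s₁ s₂).ConflictFree E₂)
    (hcl₂ : (F.Sreduct F₁ F₂ S₃ E₁ s₁ s₂).Closed E₂) :
    F.Closed (E₁ ∪ (E₂ \ {s₂})) := by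
  obtain ⟨hW₁, hW₂, hdisj, hA, -, hS, hS₃⟩ := hsplit
  have hA₁ : F₁.A ⊆ F.A := hA ▸ Set.subset_union_left
  have hA₂ : F₂.A ⊆ F.A := hA ▸ Set.subset_union_right
  have hin₁ : ∀ a ∈ E₁ ∪ (E₂ \ {s₂}), a ∈ F₁.A → a ∈ E₁ := by
    rintro a (ha | ⟨ha, -⟩) haA
    · exact ha
    · rcases Sreduct_A_subset (hE₂ ha) with ha₂ | rfl | rfl
      · exact absurd (Set.mem_inter haA ha₂) (hdisj ▸ Set.notMem_empty a)
      · exact absurd (hA₁ haA) hs₁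
      · exact absurd (hA₁ haA) hs₂
  have hin₂ : ∀ a ∈ E₁ ∪ (E₂ \ {s₂}), a ∈ F₂.A → a ∈ E₂ := by
    rintro a (ha | ⟨ha, -⟩) haA
    · exact absurd (Set.mem_inter (hE₁ ha) haA) (hdisj ▸ Set.notMem_empty a)
    · exact ha
  refine closed_iff.2 fun T h hTh hTE => ?_
  rw [hS] at hTh
  rcases hTh with (hTh | hTh) | hTh
  · exact .inl (closed_iff.1 hcl₁ T h hTh fun t ht => hin₁ t (hTE ht) ((hW₁.2 _ hTh).1 ht))
  · have hh := (hW₂.2 _ hTh).2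
    refine .inr ⟨closed_iff.1 hcl₂ T h (S_subset_Sreduct_S hTh) fun t ht =>
      hin₂ t (hTE ht) ((hW₂.2 _ hTh).1 ht), ?_⟩
    rintro rfl
    exact hs₂ (hA₂ hh)
  · by_contra hh
    have hT : T ∈ suppIncompatible F₁ S₃ E₁ :=
      ⟨h, (hS₃ _ hTh).2.2, hTh, fun t ht => hin₁ t (hTE ht.1) ht.2, fun h' => hh (.inl h')⟩
    exact Sreduct_inter_not_subset hT hcf₂ hcl₂ fun t ht => hin₂ t (hTE ht.1) ht.2

theorem closed_inter_left (hsplit : F.IsSupportSplitting F₁ F₂ S₃) (hcl : F.Closed E) :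
    F₁.Closed (E ∩ F₁.A) := by
  obtain ⟨hW₁, -, -, -, -, hS, -⟩ := hsplit
  exact hcl.inter_of_S_subset (hS ▸ Set.subset_union_left.trans Set.subset_union_left)
    fun p hp => (hW₁.2 p hp).2

/-- A support-incompatible tail that met `E` in `A₂` would lie in `E` altogether, so the closed
set `E` would contain its head, which lies in `A₁` but outside `E ∩ A₁`. -/
theorem inter_not_subset_of_closed (hsplit : F.IsSupportSplitting F₁ F₂ S₃) (hcl : F.Closed E)
    {T : Set α} (hT : T ∈ suppIncompatible F₁ S₃ (E ∩ F₁.A)) : ¬ T ∩ F₂.A ⊆ E := by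
  obtain ⟨-, -, -, hA, -, hS, hS₃⟩ := hsplit
  obtain ⟨h, hh, hTh, hT₁, hhE⟩ := hT
  intro hT₂
  have hTE : T ⊆ E := fun t ht => by
    rcases hA ▸ (hS₃ _ hTh).2.1 ht with ht₁ | ht₂
    · exact (hT₁ ⟨ht, ht₁⟩).1
    · exact hT₂ ⟨ht, ht₂⟩
  exact hhE ⟨closed_iff.1 hcl T h (hS ▸ .inr hTh) hTE, hh⟩

theorem closed_inter_right (hsplit : F.IsSupportSplitting F₁ F₂ S₃) (hcl : F.Closed E) :
    (F.Sreduct F₁ F₂ S₃ (E ∩ F₁.A) s₁ s₂).Closed (E ∩ F₂.A) := by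
  refine closed_iff.2 fun T h hTh hTE => ?_
  rcases mem_Sreduct_S hTh with hTh₂ | ⟨T₀, hT₀, rfl⟩
  · obtain ⟨-, hW₂, -, -, -, hS, -⟩ := hsplit
    have hTh : (T, h) ∈ F.S := hS ▸ .inl (.inr hTh₂)
    exact ⟨closed_iff.1 hcl T h hTh fun t ht => (hTE ht).1, (hW₂.2 _ hTh₂).2⟩
  · exact absurd (fun t ht => (hTE ht).1) (hsplit.inter_not_subset_of_closed hcl hT₀)

end IsSupportSplitting

end BSAF

theorem BSAF.supportSplitting_closure_general (F F₁ F₂ : BSAF α) (S₃ : Set (Set α × α))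
    (hsplit : F.IsSupportSplitting F₁ F₂ S₃)
    (s₁ s₂ : α) (hs₁ : s₁ ∉ F.A) (hs₂ : s₂ ∉ F.A) :
    (∀ E₁ E₂ : Set α, F₁.Admissible E₁ →
      (F.Sreduct F₁ F₂ S₃ E₁ s₁ s₂).Admissible E₂ →
      F.Closed (E₁ ∪ (E₂ \ {s₂}))) ∧
    (∀ E : Set α, F.Admissible E →
      F₁.Closed (E ∩ F₁.A) ∧
      (F.Sreduct F₁ F₂ S₃ (E ∩ F₁.A) s₁ s₂).Closed (E ∩ F₂.A)) :=
  ⟨fun _ _ ⟨hE₁, _, hcl₁, _⟩ ⟨hE₂, hcf₂, hcl₂, _⟩ =>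
      hsplit.closed_union_sdiff hs₁ hs₂ hE₁ hcl₁ hE₂ hcf₂ hcl₂,
    fun _ ⟨_, _, hcl, _⟩ => ⟨hsplit.closed_inter_left hcl, hsplit.closed_inter_right hcl⟩⟩

/-- Closure lemma for support splittings. -/
theorem BSAF.supportSplitting_closure (F F₁ F₂ : BSAF α) (S₃ : Set (Set α × α))
    (hsplit : F.IsSupportSplitting F₁ F₂ S₃) (hfin : F.A.Finite)
    (s₁ s₂ : α) (hs₁ : s₁ ∉ F.A) (hs₂ : s₂ ∉ F.A) (hne : s₁ ≠ s₂) :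
    (∀ E₁ E₂ : Set α, F₁.Admissible E₁ →
      (F.Sreduct F₁ F₂ S₃ E₁ s₁ s₂).Admissible E₂ →
      F.Closed (E₁ ∪ (E₂ \ {s₂}))) ∧
    (∀ E : Set α, F.Admissible E →
      F₁.Closed (E ∩ F₁.A) ∧
      (F.Sreduct F₁ F₂ S₃ (E ∩ F₁.A) s₁ s₂).Closed (E ∩ F₂.A)) :=
  BSAF.supportSplitting_closure_general F F₁ F₂ S₃ hsplit s₁ s₂ hs₁ hs₂
end

section
/- Support splitting theorem for stable semantics: Let (F₁,F₂,S₃) be a support splitting of BSAF F and F₂^{E₁} the S-reduct. (1) If E₁ ∈ stb(F₁) and E₂ ∈ stb(F₂^{E₁}), then E₁ ∪ (E₂ \ {*₂}) ∈ stb(F). (2) If E ∈ stb(F), then E ∩ A₁ ∈ stb(F₁) and either E ∩ A₂ ∈ stb(F₂^{E₁}) or (E ∩ A₂) ∪ {*₂} ∈ stb(F₂^{E₁}). -/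
variable {α : Type*}

/-!
Attacks never cross a support splitting and the only crossing supports are those of `S₃`, so a
set `E₁ ∪ E₂` with `E₁ ⊆ A₁`, `E₂ ⊆ A₂` is stable in `F` exactly when `E₁` is stable in `F₁`,
`E₂` is stable in `F₂`, and no `T ∈ 𝒯(E₁)` has `T ∩ A₂ ⊆ E₂` (such a `T` would be accepted
without its supported head). The S-reduct expresses this last condition inside `F₂`: `s₁` is
attacked by `∅`, so it lies in no stable set, and a support of `s₁` by `T ∩ A₂` forbids
`T ∩ A₂`; every attacker of `s₂` contains `s₂`, so `s₂` lies in every stable set of the reduct,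
and then the self-attack of `s₂` through `T ∩ A₂` forbids `T ∩ A₂` as well.
-/

namespace BSAF

variable {F G F₁ F₂ : BSAF α} {S₃ : Set (Set α × α)} {E E' E₁ E₂ : Set α} {s₁ s₂ : α}

theorem closed_iff_forall_support :
    F.Closed E ↔ ∀ T h, (T, h) ∈ F.S → T ⊆ E → h ∈ E := by
  refine ⟨fun hE T h hS hT => ?_, fun hE => ?_⟩
  · rw [← hE]
    exact InCl.step hS fun t ht => InCl.base (hT ht)
  · refine Set.Subset.antisymm (fun a ha => ?_) fun a => InCl.base
    induction ha with
    | base h => exact h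
    | step hS _ ih => exact hE _ _ hS ih

theorem ConflictFree.mono (hE : F.ConflictFree E) (hR : G.R ⊆ F.R) (hE' : E' ⊆ E) :
    G.ConflictFree E' := fun ⟨T, h, hT, hTE, hh⟩ => hE ⟨T, h, hR hT, hTE.trans hE', hE' hh⟩

def AttacksOutside (F : BSAF α) (E : Set α) : Prop :=
  ∀ x ∈ F.A \ E, ∃ T, (T, x) ∈ F.R ∧ T ⊆ E

/-- Defence comes for free: an attacker of a member of a conflict-free `E` has a member
outside `E`, and that member is attacked by `E`. -/
theorem stable_iff :
    F.Stable E ↔ E ⊆ F.A ∧ F.ConflictFree E ∧ F.Closed E ∧ F.AttacksOutside E := by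
  refine ⟨fun ⟨⟨hA, hcf, hcl, _⟩, hout⟩ => ⟨hA, hcf, hcl, hout⟩,
    fun ⟨hA, hcf, hcl, hout⟩ => ⟨⟨hA, hcf, hcl, ?_⟩, hout⟩⟩
  rintro a ha D hDA - ⟨T, hTa, hTD⟩
  obtain ⟨t, htT, htE⟩ := Set.not_subset.1 fun hTE => hcf ⟨T, a, hTa, hTE, ha⟩
  obtain ⟨U, hU, hUE⟩ := hout t ⟨hDA (hTD htT), htE⟩
  exact ⟨U, t, hU, hUE, hTD htT⟩

namespace IsSupportSplitting

theorem right_subset (hF : F.IsSupportSplitting F₁ F₂ S₃) : F₂.A ⊆ F.A :=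
  hF.2.2.2.1 ▸ Set.subset_union_right

theorem union_inter_left_subset (hF : F.IsSupportSplitting F₁ F₂ S₃) (hE₂ : E₂ ⊆ F₂.A) :
    (E₁ ∪ E₂) ∩ F₁.A ⊆ E₁ := by
  rintro a ⟨ha | ha, haA⟩
  · exact ha
  · exact absurd (Set.mem_inter haA (hE₂ ha)) (hF.2.2.1 ▸ Set.notMem_empty a)

theorem union_inter_right_subset (hF : F.IsSupportSplitting F₁ F₂ S₃) (hE₁ : E₁ ⊆ F₁.A) :
    (E₁ ∪ E₂) ∩ F₂.A ⊆ E₂ := by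
  rintro a ⟨ha | ha, haA⟩
  · exact absurd (Set.mem_inter (hE₁ ha) haA) (hF.2.2.1 ▸ Set.notMem_empty a)
  · exact ha

theorem conflictFree_union_iff (hF : F.IsSupportSplitting F₁ F₂ S₃) (hE₁ : E₁ ⊆ F₁.A)
    (hE₂ : E₂ ⊆ F₂.A) :
    F.ConflictFree (E₁ ∪ E₂) ↔ F₁.ConflictFree E₁ ∧ F₂.ConflictFree E₂ := by
  obtain ⟨hW₁, hW₂, -, -, hR, -⟩ := id hF
  refine ⟨fun h => ⟨h.mono (hR ▸ Set.subset_union_left) Set.subset_union_left,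
    h.mono (hR ▸ Set.subset_union_right) Set.subset_union_right⟩, ?_⟩
  rintro ⟨hcf₁, hcf₂⟩ ⟨T, h, hT, hTE, hhE⟩
  rw [hR] at hT
  rcases hT with hT | hT
  · exact hcf₁ ⟨T, h, hT, fun t ht => hF.union_inter_left_subset hE₂ ⟨hTE ht, (hW₁.1 _ hT).1 ht⟩,
      hF.union_inter_left_subset hE₂ ⟨hhE, (hW₁.1 _ hT).2⟩⟩
  · exact hcf₂ ⟨T, h, hT, fun t ht => hF.union_inter_right_subset hE₁ ⟨hTE ht, (hW₂.1 _ hT).1 ht⟩,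
      hF.union_inter_right_subset hE₁ ⟨hhE, (hW₂.1 _ hT).2⟩⟩

theorem closed_union_iff (hF : F.IsSupportSplitting F₁ F₂ S₃) (hE₁ : E₁ ⊆ F₁.A)
    (hE₂ : E₂ ⊆ F₂.A) :
    F.Closed (E₁ ∪ E₂) ↔ F₁.Closed E₁ ∧ F₂.Closed E₂ ∧
      ∀ T ∈ suppIncompatible F₁ S₃ E₁, ¬ T ∩ F₂.A ⊆ E₂ := by
  obtain ⟨hW₁, hW₂, -, hA, -, hS, hS₃⟩ := id hF
  have hsplitT : ∀ {T}, T ⊆ F.A → T ∩ F₁.A ⊆ E₁ → T ∩ F₂.A ⊆ E₂ → T ⊆ E₁ ∪ E₂ := by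
    intro T hT h₁ h₂ t ht
    rcases hA ▸ hT ht with htA | htA
    exacts [Or.inl (h₁ ⟨ht, htA⟩), Or.inr (h₂ ⟨ht, htA⟩)]
  simp only [closed_iff_forall_support, hS, Set.mem_union]
  constructor
  · intro hcl
    refine ⟨fun T h hT hTE => ?_, fun T h hT hTE => ?_, ?_⟩
    · exact hF.union_inter_left_subset hE₂
        ⟨hcl T h (.inl (.inl hT)) (hTE.trans Set.subset_union_left), (hW₁.2 _ hT).2⟩
    · exact hF.union_inter_right_subset hE₁
        ⟨hcl T h (.inl (.inr hT)) (hTE.trans Set.subset_union_right), (hW₂.2 _ hT).2⟩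
    · rintro T ⟨h, hhA, hT, hT₁, hhE⟩ hT₂
      exact hhE (hF.union_inter_left_subset hE₂
        ⟨hcl T h (.inr hT) (hsplitT (hS₃ _ hT).2.1 hT₁ hT₂), hhA⟩)
  · rintro ⟨hcl₁, hcl₂, hT₃⟩ T h (((hT | hT) | hT)) hTE
    · exact .inl (hcl₁ T h hT fun t ht => hF.union_inter_left_subset hE₂
        ⟨hTE ht, (hW₁.2 _ hT).1 ht⟩)
    · exact .inr (hcl₂ T h hT fun t ht => hF.union_inter_right_subset hE₁
        ⟨hTE ht, (hW₂.2 _ hT).1 ht⟩)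
    · by_contra hhE
      have hT₁ : T ∩ F₁.A ⊆ E₁ := fun t ht => hF.union_inter_left_subset hE₂ ⟨hTE ht.1, ht.2⟩
      exact hT₃ T ⟨h, (hS₃ _ hT).2.2, hT, hT₁, fun hh => hhE (.inl hh)⟩
        fun t ht => hF.union_inter_right_subset hE₁ ⟨hTE ht.1, ht.2⟩

theorem attacksOutside_union_iff (hF : F.IsSupportSplitting F₁ F₂ S₃) (hE₁ : E₁ ⊆ F₁.A)
    (hE₂ : E₂ ⊆ F₂.A) :
    F.AttacksOutside (E₁ ∪ E₂) ↔ F₁.AttacksOutside E₁ ∧ F₂.AttacksOutside E₂ := by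
  obtain ⟨hW₁, hW₂, hdisj, hA, hR, -⟩ := id hF
  have hdisj' : ∀ x ∈ F₁.A, x ∉ F₂.A := fun x h₁ h₂ =>
    Set.notMem_empty x (hdisj ▸ Set.mem_inter h₁ h₂)
  constructor
  · intro hout
    refine ⟨fun x ⟨hx, hxE⟩ => ?_, fun x ⟨hx, hxE⟩ => ?_⟩
    · obtain ⟨T, hT, hTE⟩ := hout x ⟨hA ▸ .inl hx, by
        rintro (h | h)
        exacts [hxE h, hdisj' x hx (hE₂ h)]⟩
      rcases hR ▸ hT with hT | hT
      · exact ⟨T, hT, fun t ht => hF.union_inter_left_subset hE₂ ⟨hTE ht, (hW₁.1 _ hT).1 ht⟩⟩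
      · exact absurd (hW₂.1 _ hT).2 (hdisj' x hx)
    · obtain ⟨T, hT, hTE⟩ := hout x ⟨hA ▸ .inr hx, by
        rintro (h | h)
        exacts [hdisj' x (hE₁ h) hx, hxE h]⟩
      rcases hR ▸ hT with hT | hT
      · exact absurd hx (hdisj' x (hW₁.1 _ hT).2)
      · exact ⟨T, hT, fun t ht => hF.union_inter_right_subset hE₁ ⟨hTE ht, (hW₂.1 _ hT).1 ht⟩⟩
  · rintro ⟨hout₁, hout₂⟩ x ⟨hx, hxE⟩
    rcases hA ▸ hx with hx | hx
    · obtain ⟨T, hT, hTE⟩ := hout₁ x ⟨hx, fun h => hxE (.inl h)⟩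
      exact ⟨T, hR ▸ .inl hT, hTE.trans Set.subset_union_left⟩
    · obtain ⟨T, hT, hTE⟩ := hout₂ x ⟨hx, fun h => hxE (.inr h)⟩
      exact ⟨T, hR ▸ .inr hT, hTE.trans Set.subset_union_right⟩

theorem stable_union_iff (hF : F.IsSupportSplitting F₁ F₂ S₃) (hE₁ : E₁ ⊆ F₁.A)
    (hE₂ : E₂ ⊆ F₂.A) :
    F.Stable (E₁ ∪ E₂) ↔ F₁.Stable E₁ ∧ F₂.Stable E₂ ∧
      ∀ T ∈ suppIncompatible F₁ S₃ E₁, ¬ T ∩ F₂.A ⊆ E₂ := by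
  have hE : E₁ ∪ E₂ ⊆ F.A := hF.2.2.2.1 ▸ Set.union_subset_union hE₁ hE₂
  rw [stable_iff, stable_iff, stable_iff, hF.conflictFree_union_iff hE₁ hE₂,
    hF.closed_union_iff hE₁ hE₂, hF.attacksOutside_union_iff hE₁ hE₂]
  tauto

end IsSupportSplitting

theorem mem_Sreduct_A_iff {a : α} :
    a ∈ (F.Sreduct F₁ F₂ S₃ E₁ s₁ s₂).A ↔ a ∈ F₂.A ∨
      ((F.closureDefeated F₁ S₃ E₁).Nonempty ∧ a = s₁) ∨
      ((suppIncompatible F₁ S₃ E₁ \ F.closureDefeated F₁ S₃ E₁).Nonempty ∧ a = s₂) := by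
  simp only [Sreduct, bunion, type1Mod, type2Mod, Set.nonempty_iff_ne_empty]
  split_ifs <;> simp_all <;> tauto

theorem mem_Sreduct_R_iff {p : Set α × α} :
    p ∈ (F.Sreduct F₁ F₂ S₃ E₁ s₁ s₂).R ↔ p ∈ F₂.R ∨
      ((F.closureDefeated F₁ S₃ E₁).Nonempty ∧ p = (∅, s₁)) ∨
      (∃ T ∈ suppIncompatible F₁ S₃ E₁ \ F.closureDefeated F₁ S₃ E₁,
        p = ((T ∩ F₂.A) ∪ {s₂}, s₂)) := by
  simp only [Sreduct, bunion, type1Mod, type2Mod, Set.nonempty_iff_ne_empty]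
  split_ifs <;> simp_all [Set.eq_empty_iff_forall_notMem] <;> aesop

theorem mem_Sreduct_S_iff {p : Set α × α} :
    p ∈ (F.Sreduct F₁ F₂ S₃ E₁ s₁ s₂).S ↔ p ∈ F₂.S ∨
      (∃ T ∈ F.closureDefeated F₁ S₃ E₁, p = (T ∩ F₂.A, s₁)) ∨
      (∃ T ∈ suppIncompatible F₁ S₃ E₁ \ F.closureDefeated F₁ S₃ E₁,
        p = (T ∩ F₂.A, s₂)) := by
  simp only [Sreduct, bunion, type1Mod, type2Mod]
  split_ifs <;> simp_all [Set.eq_empty_iff_forall_notMem] <;> aesop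

theorem mem_Sreduct_R_iff_of_mem (hs₁ : s₁ ∉ F₂.A) (hs₂ : s₂ ∉ F₂.A) {T : Set α} {x : α}
    (hx : x ∈ F₂.A) : (T, x) ∈ (F.Sreduct F₁ F₂ S₃ E₁ s₁ s₂).R ↔ (T, x) ∈ F₂.R := by
  refine ⟨fun h => ?_, fun h => mem_Sreduct_R_iff.2 (.inl h)⟩
  rcases mem_Sreduct_R_iff.1 h with h | ⟨-, heq⟩ | ⟨_, -, heq⟩
  · exact h
  · exact absurd ((Prod.mk_inj.1 heq).2 ▸ hx) hs₁
  · exact absurd ((Prod.mk_inj.1 heq).2 ▸ hx) hs₂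

theorem mem_Sreduct_R_empty (hs₁ : s₁ ∉ F₂.A) (hne : s₁ ≠ s₂)
    (h : s₁ ∈ (F.Sreduct F₁ F₂ S₃ E₁ s₁ s₂).A) :
    (∅, s₁) ∈ (F.Sreduct F₁ F₂ S₃ E₁ s₁ s₂).R := by
  rcases mem_Sreduct_A_iff.1 h with h | ⟨hD, -⟩ | ⟨-, h⟩
  exacts [absurd h hs₁, mem_Sreduct_R_iff.2 (.inr (.inl ⟨hD, rfl⟩)), absurd h hne]

theorem s₂_mem_of_mem_Sreduct_R (hs₂ : s₂ ∉ F₂.A) (hne : s₁ ≠ s₂) (hW₂ : F₂.WithinA)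
    {T : Set α} (h : (T, s₂) ∈ (F.Sreduct F₁ F₂ S₃ E₁ s₁ s₂).R) : s₂ ∈ T := by
  rcases mem_Sreduct_R_iff.1 h with h | ⟨-, heq⟩ | ⟨U, -, heq⟩
  · exact absurd (hW₂.1 _ h).2 hs₂
  · exact absurd (Prod.mk_inj.1 heq).2.symm hne
  · exact (Prod.mk_inj.1 heq).1 ▸ .inr rfl

theorem s₁_notMem_of_Sreduct_stable (hs₁ : s₁ ∉ F₂.A) (hne : s₁ ≠ s₂)
    (hE : (F.Sreduct F₁ F₂ S₃ E₁ s₁ s₂).Stable E₂) : s₁ ∉ E₂ :=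
  fun h => hE.1.2.1 ⟨∅, s₁, mem_Sreduct_R_empty hs₁ hne (hE.1.1 h), Set.empty_subset _, h⟩

theorem s₂_mem_of_Sreduct_stable (hs₂ : s₂ ∉ F₂.A) (hne : s₁ ≠ s₂) (hW₂ : F₂.WithinA)
    (hE : (F.Sreduct F₁ F₂ S₃ E₁ s₁ s₂).Stable E₂)
    (hTD : (suppIncompatible F₁ S₃ E₁ \ F.closureDefeated F₁ S₃ E₁).Nonempty) : s₂ ∈ E₂ := by
  by_contra h
  obtain ⟨T, hT, hTE⟩ := hE.2 s₂ ⟨mem_Sreduct_A_iff.2 (.inr (.inr ⟨hTD, rfl⟩)), h⟩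
  exact h (hTE (s₂_mem_of_mem_Sreduct_R hs₂ hne hW₂ hT))

theorem not_subset_of_Sreduct_stable (hs₁ : s₁ ∉ F₂.A) (hs₂ : s₂ ∉ F₂.A) (hne : s₁ ≠ s₂)
    (hW₂ : F₂.WithinA) (hE : (F.Sreduct F₁ F₂ S₃ E₁ s₁ s₂).Stable E₂) {T : Set α}
    (hT : T ∈ suppIncompatible F₁ S₃ E₁) :
    ¬ T ∩ F₂.A ⊆ E₂ := by
  intro hTE
  by_cases hD : T ∈ F.closureDefeated F₁ S₃ E₁
  · exact s₁_notMem_of_Sreduct_stable hs₁ hne hE (closed_iff_forall_support.1 hE.1.2.2.1 _ _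
      (mem_Sreduct_S_iff.2 (.inr (.inl ⟨T, hD, rfl⟩))) hTE)
  · have hs₂E := s₂_mem_of_Sreduct_stable hs₂ hne hW₂ hE ⟨T, hT, hD⟩
    exact hE.1.2.1 ⟨_, s₂, mem_Sreduct_R_iff.2 (.inr (.inr ⟨T, ⟨hT, hD⟩, rfl⟩)),
      Set.union_subset hTE (Set.singleton_subset_iff.2 hs₂E), hs₂E⟩

theorem stable_diff_of_Sreduct_stable (hs₁ : s₁ ∉ F₂.A) (hs₂ : s₂ ∉ F₂.A) (hne : s₁ ≠ s₂)
    (hW₂ : F₂.WithinA) (hE : (F.Sreduct F₁ F₂ S₃ E₁ s₁ s₂).Stable E₂) : F₂.Stable (E₂ \ {s₂}) := by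
  obtain ⟨hEA, hcf, hcl, hout⟩ := stable_iff.1 hE
  have hne₂ : ∀ {a}, a ∈ F₂.A → a ≠ s₂ := fun ha h => hs₂ (h ▸ ha)
  refine stable_iff.2 ⟨?_, hcf.mono (fun p hp => mem_Sreduct_R_iff.2 (.inl hp)) Set.sdiff_subset,
    ?_, ?_⟩
  · rintro a ⟨ha, has₂⟩
    rcases mem_Sreduct_A_iff.1 (hEA ha) with h | ⟨-, rfl⟩ | ⟨-, rfl⟩
    exacts [h, absurd ha (s₁_notMem_of_Sreduct_stable hs₁ hne hE), absurd rfl has₂]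
  · refine closed_iff_forall_support.2 fun T h hT hTE => ⟨?_, hne₂ (hW₂.2 _ hT).2⟩
    exact closed_iff_forall_support.1 hcl T h (mem_Sreduct_S_iff.2 (.inl hT))
      (hTE.trans Set.sdiff_subset)
  · rintro x ⟨hx, hxE⟩
    obtain ⟨T, hT, hTE⟩ := hout x ⟨mem_Sreduct_A_iff.2 (.inl hx), fun h => hxE ⟨h, hne₂ hx⟩⟩
    have hT₂ := (mem_Sreduct_R_iff_of_mem hs₁ hs₂ hx).1 hT
    exact ⟨T, hT₂, fun t ht => ⟨hTE ht, hne₂ ((hW₂.1 _ hT₂).1 ht)⟩⟩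

theorem Sreduct_stable_of_stable (hs₁ : s₁ ∉ F₂.A) (hs₂ : s₂ ∉ F₂.A) (hne : s₁ ≠ s₂)
    (hW₂ : F₂.WithinA) (hE₂ : F₂.Stable E₂)
    (hT : ∀ T ∈ suppIncompatible F₁ S₃ E₁, ¬ T ∩ F₂.A ⊆ E₂)
    (hE₂E' : E₂ ⊆ E') (hE' : E' ⊆ E₂ ∪ {s₂})
    (hs₂E' : s₂ ∈ E' ↔ (suppIncompatible F₁ S₃ E₁ \ F.closureDefeated F₁ S₃ E₁).Nonempty) :
    (F.Sreduct F₁ F₂ S₃ E₁ s₁ s₂).Stable E' := by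
  obtain ⟨hEA, hcf, hcl, hout⟩ := stable_iff.1 hE₂
  have hE'A₂ : E' ∩ F₂.A ⊆ E₂ := fun a ⟨ha, haA⟩ =>
    (hE' ha).resolve_right fun h => hs₂ (Set.mem_singleton_iff.1 h ▸ haA)
  have hT' : ∀ T ∈ suppIncompatible F₁ S₃ E₁, ¬ T ∩ F₂.A ⊆ E' := fun T hT₁ hTE =>
    hT T hT₁ fun t ht => hE'A₂ ⟨hTE ht, ht.2⟩
  refine stable_iff.2 ⟨fun a ha => ?_, ?_, ?_, ?_⟩
  · rcases hE' ha with ha' | rfl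
    exacts [mem_Sreduct_A_iff.2 (.inl (hEA ha')),
      mem_Sreduct_A_iff.2 (.inr (.inr ⟨hs₂E'.1 ha, rfl⟩))]
  · rintro ⟨T, h, hTR, hTE, hh⟩
    rcases mem_Sreduct_R_iff.1 hTR with hTR | ⟨-, heq⟩ | ⟨U, hU, heq⟩
    · exact hcf ⟨T, h, hTR, fun t ht => hE'A₂ ⟨hTE ht, (hW₂.1 _ hTR).1 ht⟩,
        hE'A₂ ⟨hh, (hW₂.1 _ hTR).2⟩⟩
    · obtain ⟨-, rfl⟩ := Prod.mk_inj.1 heq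
      rcases hE' hh with hh | hh
      exacts [hs₁ (hEA hh), hne hh]
    · obtain ⟨rfl, -⟩ := Prod.mk_inj.1 heq
      exact hT' U hU.1 (Set.subset_union_left.trans hTE)
  · refine closed_iff_forall_support.2 fun T h hTS hTE => ?_
    rcases mem_Sreduct_S_iff.1 hTS with hTS | ⟨U, hU, heq⟩ | ⟨U, hU, heq⟩
    · exact hE₂E' (closed_iff_forall_support.1 hcl T h hTS fun t ht =>
        hE'A₂ ⟨hTE ht, (hW₂.2 _ hTS).1 ht⟩)
    · exact absurd ((Prod.mk_inj.1 heq).1 ▸ hTE) (hT' U hU.1)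
    · exact absurd ((Prod.mk_inj.1 heq).1 ▸ hTE) (hT' U hU.1)
  · rintro x ⟨hx, hxE⟩
    rcases mem_Sreduct_A_iff.1 hx with hx | ⟨hD, rfl⟩ | ⟨hTD, rfl⟩
    · obtain ⟨T, hT, hTE⟩ := hout x ⟨hx, fun h => hxE (hE₂E' h)⟩
      exact ⟨T, mem_Sreduct_R_iff.2 (.inl hT), hTE.trans hE₂E'⟩
    · exact ⟨∅, mem_Sreduct_R_iff.2 (.inr (.inl ⟨hD, rfl⟩)), Set.empty_subset _⟩
    · exact absurd (hs₂E'.2 hTD) hxE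

theorem Sreduct_stable_or_stable_union (hs₁ : s₁ ∉ F₂.A) (hs₂ : s₂ ∉ F₂.A) (hne : s₁ ≠ s₂)
    (hW₂ : F₂.WithinA) (hE₂ : F₂.Stable E₂)
    (hT : ∀ T ∈ suppIncompatible F₁ S₃ E₁, ¬ T ∩ F₂.A ⊆ E₂) :
    (F.Sreduct F₁ F₂ S₃ E₁ s₁ s₂).Stable E₂ ∨ (F.Sreduct F₁ F₂ S₃ E₁ s₁ s₂).Stable (E₂ ∪ {s₂}) := by
  by_cases hTD : (suppIncompatible F₁ S₃ E₁ \ F.closureDefeated F₁ S₃ E₁).Nonempty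
  · exact .inr (Sreduct_stable_of_stable hs₁ hs₂ hne hW₂ hE₂ hT Set.subset_union_left le_rfl
      (iff_of_true (.inr rfl) hTD))
  · exact .inl (Sreduct_stable_of_stable hs₁ hs₂ hne hW₂ hE₂ hT le_rfl Set.subset_union_left
      (iff_of_false (fun h => hs₂ (hE₂.1.1 h)) hTD))

end BSAF

theorem BSAF.supportSplitting_stable_general (F F₁ F₂ : BSAF α) (S₃ : Set (Set α × α))
    (hsplit : F.IsSupportSplitting F₁ F₂ S₃)
    (s₁ s₂ : α) (hs₁ : s₁ ∉ F.A) (hs₂ : s₂ ∉ F.A) (hne : s₁ ≠ s₂) :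
    (∀ E₁ E₂ : Set α, F₁.Stable E₁ →
      (F.Sreduct F₁ F₂ S₃ E₁ s₁ s₂).Stable E₂ →
      F.Stable (E₁ ∪ (E₂ \ {s₂}))) ∧
    (∀ E : Set α, F.Stable E →
      F₁.Stable (E ∩ F₁.A) ∧
      ((F.Sreduct F₁ F₂ S₃ (E ∩ F₁.A) s₁ s₂).Stable (E ∩ F₂.A) ∨
        (F.Sreduct F₁ F₂ S₃ (E ∩ F₁.A) s₁ s₂).Stable ((E ∩ F₂.A) ∪ {s₂}))) := by
  have hs₁' : s₁ ∉ F₂.A := fun h => hs₁ (hsplit.right_subset h)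
  have hs₂' : s₂ ∉ F₂.A := fun h => hs₂ (hsplit.right_subset h)
  have hW₂ : F₂.WithinA := hsplit.2.1
  refine ⟨fun E₁ E₂ hE₁ hE₂ => ?_, fun E hE => ?_⟩
  · have hE₂' := stable_diff_of_Sreduct_stable hs₁' hs₂' hne hW₂ hE₂
    refine (hsplit.stable_union_iff hE₁.1.1 hE₂'.1.1).2 ⟨hE₁, hE₂', fun T hT hTE => ?_⟩
    exact not_subset_of_Sreduct_stable hs₁' hs₂' hne hW₂ hE₂ hT (hTE.trans Set.sdiff_subset)
  · have hE_eq : E = E ∩ F₁.A ∪ E ∩ F₂.A := by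
      rw [← Set.inter_union_distrib_left, ← hsplit.2.2.2.1, Set.inter_eq_left.2 hE.1.1]
    rw [hE_eq] at hE
    obtain ⟨hE₁, hE₂, hT⟩ :=
      (hsplit.stable_union_iff Set.inter_subset_right Set.inter_subset_right).1 hE
    exact ⟨hE₁, Sreduct_stable_or_stable_union hs₁' hs₂' hne hW₂ hE₂ hT⟩

/-- Support splitting theorem for stable semantics. -/
theorem BSAF.supportSplitting_stable (F F₁ F₂ : BSAF α) (S₃ : Set (Set α × α))
    (hsplit : F.IsSupportSplitting F₁ F₂ S₃) (hfin : F.A.Finite)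
    (s₁ s₂ : α) (hs₁ : s₁ ∉ F.A) (hs₂ : s₂ ∉ F.A) (hne : s₁ ≠ s₂) :
    (∀ E₁ E₂ : Set α, F₁.Stable E₁ →
      (F.Sreduct F₁ F₂ S₃ E₁ s₁ s₂).Stable E₂ →
      F.Stable (E₁ ∪ (E₂ \ {s₂}))) ∧
    (∀ E : Set α, F.Stable E →
      F₁.Stable (E ∩ F₁.A) ∧
      ((F.Sreduct F₁ F₂ S₃ (E ∩ F₁.A) s₁ s₂).Stable (E ∩ F₂.A) ∨
        (F.Sreduct F₁ F₂ S₃ (E ∩ F₁.A) s₁ s₂).Stable ((E ∩ F₂.A) ∪ {s₂}))) :=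
  BSAF.supportSplitting_stable_general F F₁ F₂ S₃ hsplit s₁ s₂ hs₁ hs₂ hne
end
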